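/- arXiv:2603.27414 — 9 statements merged into one kernel-verified Lean document; each statement's English description precedes it below -/
import Mathlib

section
/- Let k ≥ 1, let Σ be a symmetric positive definite k×k real matrix, let 𝓘 be a finite family of nonempty subsets of {1,…,k}, and let n_I > 0 be a real number for each I ∈ 𝓘. Set M := Σ_{I∈𝓘} n_I Σ_I^† and S := M^†. Suppose a ∈ ℝ^k is supported on ∪𝓘. Define λ_I := n_I Σ_I^† S a for each I ∈ 𝓘. Then each λ_I is supported on I, Σ_{I∈𝓘} λ_I = a, and Σ_{I∈𝓘} (1/n_I) λ_I^⊤ Σ λ_I = a^⊤ S a. -/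
open Matrix

open Classical in
/-- Moore–Penrose pseudoinverse of a square real matrix (characterized by the four
Penrose conditions; it is unique whenever it exists). -/
noncomputable def pinv {n : Type*} [Fintype n] [DecidableEq n] (A : Matrix n n ℝ) :
    Matrix n n ℝ :=
  if h : ∃ B : Matrix n n ℝ,
      A * B * A = A ∧ B * A * B = B ∧ (A * B)ᵀ = A * B ∧ (B * A)ᵀ = B * A
  then h.choose else 0

/-- `restrict A I` is the k×k matrix that agrees with `A` on `I × I` and is `0` elsewhere. -/
noncomputable def restrict {k : ℕ} (A : Matrix (Fin k) (Fin k) ℝ) (I : Finset (Fin k)) :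
    Matrix (Fin k) (Fin k) ℝ :=
  fun s t => if s ∈ I ∧ t ∈ I then A s t else 0

/-!
For positive definite `Σ`, the matrix `Σ_I` is the zero extension of the invertible principal
block `Σ[I, I]`, so `Σ_I^†` is the zero extension of `Σ[I, I]⁻¹`: it is symmetric, supported
on `I × I`, and satisfies `Σ_I^† Σ Σ_I^† = Σ_I^†`. Hence `M` is supported on `U × U`,
`U = ⋃ 𝓘`, and positive definite there, so `M M^†` is the coordinate projection onto `U` and
fixes `a`. This gives `∑ λ_I = M S a = a`, and with `b = S a` each quadratic term
`(1 / n_I) λ_Iᵀ Σ λ_I` equals `n_I bᵀ Σ_I^† b`; these sum to `bᵀ M b = bᵀ a`.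
-/

variable {n R : Type*}

def IsMoorePenroseInverse [CommRing R] [Fintype n] (A B : Matrix n n R) : Prop :=
  A * B * A = A ∧ B * A * B = B ∧ (A * B)ᵀ = A * B ∧ (B * A)ᵀ = B * A

namespace IsMoorePenroseInverse
variable [CommRing R] [Fintype n] {A B C : Matrix n n R}

lemma mul_left_eq (hB : IsMoorePenroseInverse A B) (hC : IsMoorePenroseInverse A C) :
    A * B = A * C :=
  calc A * B = A * C * (A * B) := by rw [← Matrix.mul_assoc, hC.1]
    _ = (A * C)ᵀ * (A * B)ᵀ := by rw [hC.2.2.1, hB.2.2.1]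
    _ = (A * B * (A * C))ᵀ := (transpose_mul _ _).symm
    _ = (A * C)ᵀ := by rw [← Matrix.mul_assoc, hB.1]
    _ = A * C := hC.2.2.1

lemma mul_right_eq (hB : IsMoorePenroseInverse A B) (hC : IsMoorePenroseInverse A C) :
    B * A = C * A :=
  calc B * A = B * A * (C * A) := by rw [Matrix.mul_assoc, ← Matrix.mul_assoc A, hC.1]
    _ = (B * A)ᵀ * (C * A)ᵀ := by rw [hC.2.2.2, hB.2.2.2]
    _ = (C * A * (B * A))ᵀ := (transpose_mul _ _).symm
    _ = (C * A)ᵀ := by rw [Matrix.mul_assoc, ← Matrix.mul_assoc A, hB.1]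
    _ = C * A := hC.2.2.2

lemma unique (hB : IsMoorePenroseInverse A B) (hC : IsMoorePenroseInverse A C) : B = C :=
  calc B = B * A * B := hB.2.1.symm
    _ = C * (A * B) := by rw [mul_right_eq hB hC, Matrix.mul_assoc]
    _ = C := by rw [mul_left_eq hB hC, ← Matrix.mul_assoc, hC.2.1]

end IsMoorePenroseInverse

lemma dotProduct_mulVec_mulVec_of_mul_mul_self [CommRing R] [Fintype n] {P A : Matrix n n R}
    (hP : Pᵀ = P) (h : P * A * P = P) (b : n → R) :
    (P *ᵥ b) ⬝ᵥ (A *ᵥ (P *ᵥ b)) = b ⬝ᵥ (P *ᵥ b) := by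
  rw [dotProduct_comm, dotProduct_mulVec, ← mulVec_transpose, dotProduct_comm, hP,
    mulVec_mulVec, mulVec_mulVec, h]

variable [DecidableEq n]

variable (R) in
def coordInclusion [Zero R] [One R] (I : Finset n) : Matrix n I R :=
  (1 : Matrix n n R).submatrix id (↑)

section CommRing
variable [CommRing R] (I : Finset n)

lemma coordInclusion_mulVec_apply (y : I → R) (s : n) :
    (coordInclusion R I *ᵥ y) s = if h : s ∈ I then y ⟨s, h⟩ else 0 := by
  simp only [coordInclusion, mulVec, dotProduct, submatrix_apply, id, one_apply, ite_mul,
    one_mul, zero_mul]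
  split_ifs with h
  · rw [Fintype.sum_eq_single ⟨s, h⟩ fun i hi => if_neg fun hs => hi (Subtype.ext hs.symm)]
    simp
  · exact Finset.sum_eq_zero fun i _ => if_neg fun (hs : s = i) => h (hs ▸ i.2)

def extendByZero (B : Matrix I I R) : Matrix n n R :=
  coordInclusion R I * B * (coordInclusion R I)ᵀ

lemma transpose_extendByZero (B : Matrix I I R) :
    (extendByZero I B)ᵀ = extendByZero I Bᵀ := by
  simp only [extendByZero, transpose_mul, transpose_transpose, Matrix.mul_assoc]

variable [Fintype n]

lemma transpose_coordInclusion_mul {m : Type*} (A : Matrix n m R) :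
    (coordInclusion R I)ᵀ * A = A.submatrix (↑) id := by
  rw [coordInclusion, transpose_submatrix, transpose_one]
  exact one_submatrix_mul _ (Equiv.refl n) A

lemma mul_coordInclusion {m : Type*} (A : Matrix m n R) :
    A * coordInclusion R I = A.submatrix id (↑) :=
  mul_submatrix_one (Equiv.refl n) _ A

lemma transpose_coordInclusion_mul_mul (A : Matrix n n R) :
    (coordInclusion R I)ᵀ * A * coordInclusion R I = A.submatrix (↑) (↑) := by
  rw [Matrix.mul_assoc, mul_coordInclusion, transpose_coordInclusion_mul, submatrix_submatrix]
  rfl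

lemma transpose_coordInclusion_mul_self :
    (coordInclusion R I)ᵀ * coordInclusion R I = 1 := by
  rw [transpose_coordInclusion_mul, coordInclusion, submatrix_submatrix]
  exact submatrix_one _ Subtype.val_injective

lemma transpose_coordInclusion_mulVec (v : n → R) :
    (coordInclusion R I)ᵀ *ᵥ v = fun i : I => v i := by
  ext i
  simp [coordInclusion, mulVec, dotProduct, one_apply]

lemma extendByZero_mul_mul (B C : Matrix I I R) (A : Matrix n n R) :
    extendByZero I B * A * extendByZero I C =
      extendByZero I (B * A.submatrix (↑) (↑) * C) := by
  simp only [extendByZero, ← transpose_coordInclusion_mul_mul I A, Matrix.mul_assoc]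

lemma extendByZero_mul_extendByZero (B C : Matrix I I R) :
    extendByZero I B * extendByZero I C = extendByZero I (B * C) := by
  simpa [submatrix_one _ Subtype.val_injective] using extendByZero_mul_mul I B C 1

lemma extendByZero_mulVec (B : Matrix I I R) (v : n → R) :
    extendByZero I B *ᵥ v = coordInclusion R I *ᵥ (B *ᵥ fun i : I => v i) := by
  rw [extendByZero, ← mulVec_mulVec, ← mulVec_mulVec, transpose_coordInclusion_mulVec]

lemma extendByZero_mulVec_apply_of_notMem (B : Matrix I I R) (v : n → R) {s : n}
    (hs : s ∉ I) : (extendByZero I B *ᵥ v) s = 0 := by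
  rw [extendByZero_mulVec, coordInclusion_mulVec_apply, dif_neg hs]

lemma extendByZero_one_mulVec {v : n → R} (hv : ∀ s ∉ I, v s = 0) :
    extendByZero I 1 *ᵥ v = v := by
  ext s
  rw [extendByZero_mulVec, one_mulVec, coordInclusion_mulVec_apply]
  split_ifs with h
  · rfl
  · exact (hv s h).symm

lemma dotProduct_extendByZero_mulVec (B : Matrix I I R) (v : n → R) :
    v ⬝ᵥ (extendByZero I B *ᵥ v) = (fun i : I => v i) ⬝ᵥ (B *ᵥ fun i : I => v i) := by
  rw [extendByZero_mulVec, dotProduct_mulVec, ← mulVec_transpose,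
    transpose_coordInclusion_mulVec]

lemma extendByZero_apply (B : Matrix I I R) (s t : n) :
    extendByZero I B s t = if h : s ∈ I ∧ t ∈ I then B ⟨s, h.1⟩ ⟨t, h.2⟩ else 0 := by
  have := congrFun (extendByZero_mulVec I B (Pi.single t 1)) s
  rw [mulVec_single_one, col_apply, coordInclusion_mulVec_apply] at this
  rw [this]
  by_cases ht : t ∈ I
  · have : (fun i : I => (Pi.single t 1 : n → R) i) = Pi.single ⟨t, ht⟩ 1 := by
      ext i
      simp [Pi.single_apply, Subtype.ext_iff]
    simp [this, ht]
  · have : (fun i : I => (Pi.single t 1 : n → R) i) = 0 := by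
      ext i
      exact Pi.single_eq_of_ne (fun (h : (i : n) = t) => ht (h ▸ i.2)) 1
    simp [this, ht]

lemma extendByZero_submatrix {A : Matrix n n R} (hA : ∀ s t, s ∉ I ∨ t ∉ I → A s t = 0) :
    extendByZero I (A.submatrix (↑) (↑)) = A := by
  ext s t
  rw [extendByZero_apply]
  split_ifs with h
  · rfl
  · exact (hA s t (not_and_or.mp h)).symm

lemma isMoorePenroseInverse_extendByZero {B : Matrix I I R} (hB : IsUnit B.det) :
    IsMoorePenroseInverse (extendByZero I B) (extendByZero I B⁻¹) := by
  have hproj : (extendByZero I (1 : Matrix I I R))ᵀ = extendByZero I 1 := by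
    rw [transpose_extendByZero, transpose_one]
  simp only [IsMoorePenroseInverse, extendByZero_mul_extendByZero, mul_nonsing_inv _ hB,
    nonsing_inv_mul _ hB, Matrix.one_mul, hproj, and_self]

end CommRing

section PseudoInverse
variable [Fintype n] (I : Finset n)

lemma pinv_eq_of_isMoorePenroseInverse {A B : Matrix n n ℝ}
    (h : IsMoorePenroseInverse A B) : pinv A = B := by
  have hex : ∃ C : Matrix n n ℝ,
      A * C * A = A ∧ C * A * C = C ∧ (A * C)ᵀ = A * C ∧ (C * A)ᵀ = C * A := ⟨B, h⟩
  rw [pinv, dif_pos hex]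
  exact IsMoorePenroseInverse.unique hex.choose_spec h

lemma pinv_extendByZero {B : Matrix I I ℝ} (hB : IsUnit B.det) :
    pinv (extendByZero I B) = extendByZero I B⁻¹ :=
  pinv_eq_of_isMoorePenroseInverse (isMoorePenroseInverse_extendByZero I hB)

lemma mulVec_pinv_mulVec_of_support {A : Matrix n n ℝ}
    (hA : ∀ s t, s ∉ I ∨ t ∉ I → A s t = 0) (hAI : IsUnit (A.submatrix ((↑) : I → n) (↑)).det)
    {v : n → ℝ} (hv : ∀ s ∉ I, v s = 0) : A *ᵥ (pinv A *ᵥ v) = v := by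
  rw [← extendByZero_submatrix I hA, pinv_extendByZero I hAI, mulVec_mulVec,
    extendByZero_mul_extendByZero, mul_nonsing_inv _ hAI, extendByZero_one_mulVec I hv]

lemma posDef_submatrix_of_dotProduct_mulVec_pos {A : Matrix n n ℝ} (hA : A.IsHermitian)
    (hpos : ∀ x : n → ℝ, x ≠ 0 → (∀ s ∉ I, x s = 0) → 0 < x ⬝ᵥ (A *ᵥ x)) :
    (A.submatrix ((↑) : I → n) (↑)).PosDef := by
  refine PosDef.of_dotProduct_mulVec_pos (hA.submatrix _) fun y hy => ?_
  have hsupp : ∀ s ∉ I, (coordInclusion ℝ I *ᵥ y) s = 0 := fun s hs => by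
    rw [coordInclusion_mulVec_apply, dif_neg hs]
  have hne : coordInclusion ℝ I *ᵥ y ≠ 0 := fun h => hy <| by
    rw [← one_mulVec y, ← transpose_coordInclusion_mul_self I, ← mulVec_mulVec, h, mulVec_zero]
  rw [star_trivial, ← transpose_coordInclusion_mul_mul, ← mulVec_mulVec, ← mulVec_mulVec,
    dotProduct_mulVec, ← mulVec_transpose, transpose_transpose]
  exact hpos _ hne hsupp

end PseudoInverse

section Covariance
variable {k : ℕ}

lemma restrict_eq_extendByZero (A : Matrix (Fin k) (Fin k) ℝ) (I : Finset (Fin k)) :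
    restrict A I = extendByZero I (A.submatrix (↑) (↑)) := by
  ext s t
  rw [extendByZero_apply, restrict]
  split_ifs <;> rfl

variable {Sig : Matrix (Fin k) (Fin k) ℝ} {I : Finset (Fin k)}

lemma pinv_restrict_of_posDef (hSig : Sig.PosDef) :
    pinv (restrict Sig I) = extendByZero I (Sig.submatrix (↑) (↑))⁻¹ := by
  rw [restrict_eq_extendByZero,
    pinv_extendByZero I (hSig.submatrix Subtype.val_injective).det_pos.ne'.isUnit]

lemma transpose_pinv_restrict_of_posDef (hSig : Sig.PosDef) :
    (pinv (restrict Sig I))ᵀ = pinv (restrict Sig I) := by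
  rw [pinv_restrict_of_posDef hSig, transpose_extendByZero, transpose_nonsing_inv,
    ← conjTranspose_eq_transpose_of_trivial, (hSig.submatrix Subtype.val_injective).isHermitian.eq]

lemma isHermitian_pinv_restrict_of_posDef (hSig : Sig.PosDef) :
    (pinv (restrict Sig I)).IsHermitian := by
  rw [IsHermitian, conjTranspose_eq_transpose_of_trivial, transpose_pinv_restrict_of_posDef hSig]

lemma pinv_restrict_mul_mul_self_of_posDef (hSig : Sig.PosDef) :
    pinv (restrict Sig I) * Sig * pinv (restrict Sig I) = pinv (restrict Sig I) := by
  rw [pinv_restrict_of_posDef hSig, extendByZero_mul_mul,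
    nonsing_inv_mul _ (hSig.submatrix Subtype.val_injective).det_pos.ne'.isUnit, Matrix.one_mul]

lemma pinv_restrict_mulVec_apply_of_notMem (hSig : Sig.PosDef) (v : Fin k → ℝ) {s : Fin k}
    (hs : s ∉ I) : (pinv (restrict Sig I) *ᵥ v) s = 0 := by
  rw [pinv_restrict_of_posDef hSig, extendByZero_mulVec_apply_of_notMem I _ v hs]

lemma dotProduct_pinv_restrict_mulVec_nonneg (hSig : Sig.PosDef) (x : Fin k → ℝ) :
    0 ≤ x ⬝ᵥ (pinv (restrict Sig I) *ᵥ x) := by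
  rw [pinv_restrict_of_posDef hSig, dotProduct_extendByZero_mulVec]
  exact (hSig.submatrix Subtype.val_injective).inv.posSemidef.dotProduct_mulVec_nonneg _

lemma dotProduct_pinv_restrict_mulVec_pos (hSig : Sig.PosDef) {x : Fin k → ℝ} {s : Fin k}
    (hs : s ∈ I) (hx : x s ≠ 0) : 0 < x ⬝ᵥ (pinv (restrict Sig I) *ᵥ x) := by
  rw [pinv_restrict_of_posDef hSig, dotProduct_extendByZero_mulVec]
  refine (hSig.submatrix Subtype.val_injective).inv.dotProduct_mulVec_pos fun h => hx ?_
  exact congrFun h ⟨s, hs⟩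

end Covariance

section WeightedSum
variable {k : ℕ} {Sig : Matrix (Fin k) (Fin k) ℝ} {𝓘 : Finset (Finset (Fin k))}
  {c : Finset (Fin k) → ℝ}

lemma sum_smul_pinv_restrict_apply_eq_zero (hSig : Sig.PosDef) {s t : Fin k}
    (h : s ∉ 𝓘.sup id ∨ t ∉ 𝓘.sup id) : (∑ I ∈ 𝓘, c I • pinv (restrict Sig I)) s t = 0 := by
  rw [Matrix.sum_apply]
  refine Finset.sum_eq_zero fun I hI => ?_
  have hIU : I ⊆ 𝓘.sup id := Finset.le_sup (f := id) hI
  rw [Matrix.smul_apply, pinv_restrict_of_posDef hSig, extendByZero_apply,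
    dif_neg fun hst => h.elim (· (hIU hst.1)) (· (hIU hst.2)), smul_zero]

lemma dotProduct_sum_smul_pinv_restrict_mulVec_pos (hSig : Sig.PosDef)
    (hc : ∀ I ∈ 𝓘, 0 < c I) {x : Fin k → ℝ} (hx : x ≠ 0) (hxU : ∀ s ∉ 𝓘.sup id, x s = 0) :
    0 < x ⬝ᵥ ((∑ I ∈ 𝓘, c I • pinv (restrict Sig I)) *ᵥ x) := by
  obtain ⟨s, hs⟩ := Function.ne_iff.mp hx
  obtain ⟨I, hI, hsI⟩ : ∃ I ∈ 𝓘, s ∈ I := by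
    simpa using Finset.mem_sup.mp (not_imp_comm.mp (hxU s) hs)
  simp only [sum_mulVec, dotProduct_sum, smul_mulVec, dotProduct_smul, smul_eq_mul]
  exact Finset.sum_pos' (fun J hJ => mul_nonneg (hc J hJ).le
    (dotProduct_pinv_restrict_mulVec_nonneg hSig x))
    ⟨I, hI, mul_pos (hc I hI) (dotProduct_pinv_restrict_mulVec_pos hSig hsI hs)⟩

lemma mulVec_pinv_sum_smul_pinv_restrict_mulVec (hSig : Sig.PosDef) (hc : ∀ I ∈ 𝓘, 0 < c I)
    {a : Fin k → ℝ} (ha : ∀ s ∉ 𝓘.sup id, a s = 0) :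
    (∑ I ∈ 𝓘, c I • pinv (restrict Sig I)) *ᵥ
      (pinv (∑ I ∈ 𝓘, c I • pinv (restrict Sig I)) *ᵥ a) = a := by
  have hM : (∑ I ∈ 𝓘, c I • pinv (restrict Sig I)).IsHermitian :=
    isSelfAdjoint_sum _ fun I _ => (isHermitian_pinv_restrict_of_posDef hSig).smul
      (IsSelfAdjoint.all (c I))
  have hMU := posDef_submatrix_of_dotProduct_mulVec_pos (𝓘.sup id) hM
    fun x hx hxU => dotProduct_sum_smul_pinv_restrict_mulVec_pos hSig hc hx hxU
  exact mulVec_pinv_mulVec_of_support _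
    (fun s t h => sum_smul_pinv_restrict_apply_eq_zero hSig h) hMU.det_pos.ne'.isUnit ha

end WeightedSum

theorem stmt1_general (k : ℕ)
    (Sig : Matrix (Fin k) (Fin k) ℝ) (hSig : Sig.PosDef)
    (𝓘 : Finset (Finset (Fin k)))
    (n : Finset (Fin k) → ℝ) (hn : ∀ I ∈ 𝓘, 0 < n I)
    (M S : Matrix (Fin k) (Fin k) ℝ)
    (hM : M = ∑ I ∈ 𝓘, n I • pinv (restrict Sig I))
    (hS : S = pinv M)
    (a : Fin k → ℝ) (ha : ∀ s, s ∉ 𝓘.sup id → a s = 0)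
    (lam : Finset (Fin k) → (Fin k → ℝ))
    (hlam : ∀ I ∈ 𝓘, lam I = n I • (pinv (restrict Sig I) *ᵥ (S *ᵥ a))) :
    (∀ I ∈ 𝓘, ∀ s, s ∉ I → lam I s = 0) ∧
    (∑ I ∈ 𝓘, lam I = a) ∧
    (∑ I ∈ 𝓘, (1 / n I) * (lam I ⬝ᵥ (Sig *ᵥ lam I)) = a ⬝ᵥ (S *ᵥ a)) := by
  have hMS : M *ᵥ (S *ᵥ a) = a := by
    rw [hS, hM]
    exact mulVec_pinv_sum_smul_pinv_restrict_mulVec hSig hn ha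
  refine ⟨fun I hI s hs => ?_, ?_, ?_⟩
  · rw [hlam I hI, Pi.smul_apply, pinv_restrict_mulVec_apply_of_notMem hSig _ hs, smul_zero]
  · calc ∑ I ∈ 𝓘, lam I = M *ᵥ (S *ᵥ a) := by
          rw [hM, sum_mulVec]
          exact Finset.sum_congr rfl fun I hI => by rw [hlam I hI, smul_mulVec]
      _ = a := hMS
  · calc ∑ I ∈ 𝓘, (1 / n I) * (lam I ⬝ᵥ (Sig *ᵥ lam I))
        = ∑ I ∈ 𝓘, (S *ᵥ a) ⬝ᵥ ((n I • pinv (restrict Sig I)) *ᵥ (S *ᵥ a)) := by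
          refine Finset.sum_congr rfl fun I hI => ?_
          rw [hlam I hI, mulVec_smul, smul_dotProduct, dotProduct_smul,
            dotProduct_mulVec_mulVec_of_mul_mul_self (transpose_pinv_restrict_of_posDef hSig)
              (pinv_restrict_mul_mul_self_of_posDef hSig), smul_mulVec, dotProduct_smul]
          simp only [smul_eq_mul]
          field_simp [(hn I hI).ne']
      _ = (S *ᵥ a) ⬝ᵥ (M *ᵥ (S *ᵥ a)) := by rw [hM, sum_mulVec, dotProduct_sum]
      _ = a ⬝ᵥ (S *ᵥ a) := by rw [hMS, dotProduct_comm]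

theorem stmt1 (k : ℕ) (hk : 1 ≤ k)
    (Sig : Matrix (Fin k) (Fin k) ℝ) (hSig : Sig.PosDef)
    (𝓘 : Finset (Finset (Fin k))) (h𝓘 : ∀ I ∈ 𝓘, I.Nonempty)
    (n : Finset (Fin k) → ℝ) (hn : ∀ I ∈ 𝓘, 0 < n I)
    (M S : Matrix (Fin k) (Fin k) ℝ)
    (hM : M = ∑ I ∈ 𝓘, n I • pinv (restrict Sig I))
    (hS : S = pinv M)
    (a : Fin k → ℝ) (ha : ∀ s, s ∉ 𝓘.sup id → a s = 0)
    (lam : Finset (Fin k) → (Fin k → ℝ))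
    (hlam : ∀ I ∈ 𝓘, lam I = n I • (pinv (restrict Sig I) *ᵥ (S *ᵥ a))) :
    (∀ I ∈ 𝓘, ∀ s, s ∉ I → lam I s = 0) ∧
    (∑ I ∈ 𝓘, lam I = a) ∧
    (∑ I ∈ 𝓘, (1 / n I) * (lam I ⬝ᵥ (Sig *ᵥ lam I)) = a ⬝ᵥ (S *ᵥ a)) :=
  stmt1_general k Sig hSig 𝓘 n hn M S hM hS a ha lam hlam
end

section
/- Let Σ be a symmetric positive definite k×k real matrix with minimum eigenvalue γ_min, and let Σ̂ be a symmetric positive definite k×k real matrix with δ := ‖Σ − Σ̂‖_op ≤ γ_min/2. Suppose there exist I⁰ ∈ 𝓘 with 1 ∈ I⁰ and an integer n⁰ ≥ 1 such that the allocation equal to n⁰ on I⁰ and 0 elsewhere is within budget, and set σ²_classical := Σ_{11}/n⁰. If (n̂, λ̂) is a feasible pair minimizing R_{Σ̂} over all feasible pairs, and (n*, λ*) is a feasible pair minimizing R_Σ over all feasible pairs, then R_Σ(n̂, λ̂) ≤ R_Σ(n*, λ*) + (4δ/γ_min)·σ²_classical. -/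
open Matrix

/-- The ℓ²→ℓ² operator (spectral) norm of a square real matrix. -/
noncomputable def opNorm {n : Type*} [Fintype n] [DecidableEq n] (A : Matrix n n ℝ) : ℝ :=
  ‖LinearMap.toContinuousLinearMap (Matrix.toEuclideanLin A)‖

/-- The risk `R_A(n, λ) = ∑_{I ∈ 𝓘 : n_I ≥ 1} (1/n_I) λ_I^⊤ A λ_I`. -/
noncomputable def Risk {k : ℕ} (A : Matrix (Fin k) (Fin k) ℝ)
    (𝓘 : Finset (Finset (Fin k))) (n : Finset (Fin k) → ℕ)
    (lam : Finset (Fin k) → (Fin k → ℝ)) : ℝ :=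
  ∑ I ∈ 𝓘, if 1 ≤ n I then (1 / (n I : ℝ)) * (lam I ⬝ᵥ (A *ᵥ lam I)) else 0

/-- A feasible pair `(n, λ)`: the allocation `n` is within budget componentwise, each `λ_I`
is supported on `I`, `λ_I = 0` whenever `n_I = 0`, and `∑_{I∈𝓘} λ_I` equals the target
vector `e1` (the first standard basis vector). -/
def Feasible {k m : ℕ} (𝓘 : Finset (Finset (Fin k)))
    (c : Finset (Fin k) → Fin m → ℝ) (B : Fin m → ℝ) (e1 : Fin k → ℝ)
    (n : Finset (Fin k) → ℕ) (lam : Finset (Fin k) → (Fin k → ℝ)) : Prop :=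
  (∀ ℓ : Fin m, ∑ I ∈ 𝓘, (n I : ℝ) * c I ℓ ≤ B ℓ) ∧
  (∀ I ∈ 𝓘, ∀ s, s ∉ I → lam I s = 0) ∧
  (∀ I ∈ 𝓘, n I = 0 → lam I = 0) ∧
  (∑ I ∈ 𝓘, lam I = e1)

/-!
For a fixed pair `(n, λ)` the risk is linear and monotone in the matrix, so
`R_B - R_A = R_{B-A} ≤ ‖B - A‖ R_1`, while `γ R_1 ≤ R_A` when `γ` bounds `A` from below in the
Loewner order; hence `R_B ≤ (1 + ‖B - A‖ / γ) R_A`. Since `Σ̂ ≥ γ_min - δ ≥ γ_min / 2`, with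
`t = δ / γ_min ≤ 1/2` this gives
`R_Σ(n̂, λ̂) ≤ (1 + 2t) R_Σ̂(n̂, λ̂) ≤ (1 + 2t) R_Σ̂(n*, λ*) ≤ (1 + 2t)(1 + t) R_Σ(n*, λ*)`,
and `(1 + 2t)(1 + t) ≤ 1 + 4t`. Finally `R_Σ(n*, λ*) ≤ σ²_classical` because the classical
single-group pair is feasible.
-/

open scoped MatrixOrder in
lemma mul_dotProduct_self_le_dotProduct_mulVec {k : Type*} [Fintype k] [DecidableEq k]
    {A : Matrix k k ℝ} (hA : A.IsHermitian) {γ : ℝ} (hγ : ∀ i, γ ≤ hA.eigenvalues i)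
    (v : k → ℝ) : γ * (v ⬝ᵥ v) ≤ v ⬝ᵥ (A *ᵥ v) := by
  have hle : algebraMap ℝ (Matrix k k ℝ) γ ≤ A :=
    (algebraMap_le_iff_le_spectrum (a := A) hA.isSelfAdjoint).2 fun x hx => by
      obtain ⟨i, rfl⟩ := hA.spectrum_real_eq_range_eigenvalues ▸ hx
      exact hγ i
  have := (Matrix.le_iff.1 hle).dotProduct_mulVec_nonneg v
  simpa [sub_mulVec, Algebra.algebraMap_eq_smul_one, smul_mulVec, dotProduct_smul] using this

lemma abs_dotProduct_mulVec_le_opNorm {k : Type*} [Fintype k] [DecidableEq k]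
    (A : Matrix k k ℝ) (v : k → ℝ) :
    |v ⬝ᵥ (A *ᵥ v)| ≤ opNorm A * (v ⬝ᵥ v) := by
  set x : EuclideanSpace ℝ k := WithLp.toLp 2 v
  have hquad : v ⬝ᵥ (A *ᵥ v) = inner ℝ x (Matrix.toEuclideanLin A x) := by
    simp [x, EuclideanSpace.inner_eq_star_dotProduct, dotProduct_comm]
  have hnorm : v ⬝ᵥ v = ‖x‖ ^ 2 := by
    rw [← real_inner_self_eq_norm_sq, EuclideanSpace.inner_eq_star_dotProduct]
    simp [x]
  rw [hquad, hnorm]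
  calc |inner ℝ x (Matrix.toEuclideanLin A x)| ≤ ‖x‖ * ‖Matrix.toEuclideanLin A x‖ :=
        abs_real_inner_le_norm _ _
    _ ≤ ‖x‖ * (opNorm A * ‖x‖) := by
        gcongr
        exact (LinearMap.toContinuousLinearMap (Matrix.toEuclideanLin A)).le_opNorm x
    _ = opNorm A * ‖x‖ ^ 2 := by ring

lemma opNorm_sub_comm {k : Type*} [Fintype k] [DecidableEq k] (A B : Matrix k k ℝ) :
    opNorm (A - B) = opNorm (B - A) := by
  rw [opNorm, opNorm, ← neg_sub, map_neg, map_neg, norm_neg]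

lemma dotProduct_mulVec_le_opNorm_smul_one {k : Type*} [Fintype k] [DecidableEq k]
    (A : Matrix k k ℝ) (v : k → ℝ) : v ⬝ᵥ (A *ᵥ v) ≤ v ⬝ᵥ ((opNorm A • 1 : Matrix k k ℝ) *ᵥ v) := by
  simpa [smul_mulVec, dotProduct_smul] using (abs_le.1 (abs_dotProduct_mulVec_le_opNorm A v)).2

lemma sub_opNorm_mul_dotProduct_self_le {k : Type*} [Fintype k] [DecidableEq k]
    {A : Matrix k k ℝ} {γ : ℝ} (hA : ∀ v, γ * (v ⬝ᵥ v) ≤ v ⬝ᵥ (A *ᵥ v)) (B : Matrix k k ℝ)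
    (v : k → ℝ) : (γ - opNorm (A - B)) * (v ⬝ᵥ v) ≤ v ⬝ᵥ (B *ᵥ v) := by
  have := dotProduct_mulVec_le_opNorm_smul_one (A - B) v
  simp only [sub_mulVec, dotProduct_sub, smul_mulVec, one_mulVec, dotProduct_smul,
    smul_eq_mul] at this
  linarith [hA v]

section Risk

variable {k : ℕ} (𝓘 : Finset (Finset (Fin k))) (n : Finset (Fin k) → ℕ)
  (lam : Finset (Fin k) → (Fin k → ℝ))

lemma risk_mono {A B : Matrix (Fin k) (Fin k) ℝ}
    (h : ∀ v, v ⬝ᵥ (A *ᵥ v) ≤ v ⬝ᵥ (B *ᵥ v)) : Risk A 𝓘 n lam ≤ Risk B 𝓘 n lam := by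
  refine Finset.sum_le_sum fun I _ => ?_
  split_ifs
  · exact mul_le_mul_of_nonneg_left (h (lam I)) (by positivity)
  · rfl

lemma risk_nonneg {A : Matrix (Fin k) (Fin k) ℝ} (hA : A.PosSemidef) : 0 ≤ Risk A 𝓘 n lam := by
  refine Finset.sum_nonneg fun I _ => ?_
  split_ifs
  · have := hA.dotProduct_mulVec_nonneg (lam I)
    rw [star_trivial] at this
    positivity
  · rfl

lemma risk_smul (c : ℝ) (A : Matrix (Fin k) (Fin k) ℝ) :
    Risk (c • A) 𝓘 n lam = c * Risk A 𝓘 n lam := by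
  simp only [Risk, Finset.mul_sum, smul_mulVec, dotProduct_smul, smul_eq_mul]
  refine Finset.sum_congr rfl fun I _ => ?_
  split_ifs <;> ring

lemma risk_sub (A B : Matrix (Fin k) (Fin k) ℝ) :
    Risk (A - B) 𝓘 n lam = Risk A 𝓘 n lam - Risk B 𝓘 n lam := by
  simp only [Risk, ← Finset.sum_sub_distrib, sub_mulVec, dotProduct_sub]
  refine Finset.sum_congr rfl fun I _ => ?_
  split_ifs <;> ring

lemma risk_le_one_add_div_mul_risk {A B : Matrix (Fin k) (Fin k) ℝ} {γ : ℝ} (hγ : 0 < γ)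
    (hA : ∀ v, γ * (v ⬝ᵥ v) ≤ v ⬝ᵥ (A *ᵥ v)) :
    Risk B 𝓘 n lam ≤ (1 + opNorm (B - A) / γ) * Risk A 𝓘 n lam := by
  have hsub : Risk B 𝓘 n lam - Risk A 𝓘 n lam ≤ opNorm (B - A) * Risk 1 𝓘 n lam := by
    rw [← risk_sub, ← risk_smul]
    exact risk_mono 𝓘 n lam (dotProduct_mulVec_le_opNorm_smul_one (B - A))
  have hlow : γ * Risk 1 𝓘 n lam ≤ Risk A 𝓘 n lam := by
    rw [← risk_smul]
    exact risk_mono 𝓘 n lam fun v => by simpa [smul_mulVec, dotProduct_smul] using hA v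
  have hδγ : 0 ≤ opNorm (B - A) / γ := div_nonneg (norm_nonneg _) hγ.le
  calc Risk B 𝓘 n lam ≤ Risk A 𝓘 n lam + opNorm (B - A) / γ * (γ * Risk 1 𝓘 n lam) := by
        rw [← mul_assoc, div_mul_cancel₀ _ hγ.ne']
        linarith
    _ ≤ Risk A 𝓘 n lam + opNorm (B - A) / γ * Risk A 𝓘 n lam := by gcongr
    _ = (1 + opNorm (B - A) / γ) * Risk A 𝓘 n lam := by ring

end Risk

section SingleGroup

variable {k m : ℕ} {𝓘 : Finset (Finset (Fin k))} {I0 : Finset (Fin k)} {n0 : ℕ} {i : Fin k}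

lemma feasible_single_group (c : Finset (Fin k) → Fin m → ℝ) (B : Fin m → ℝ)
    (hI0 : I0 ∈ 𝓘) (hi : i ∈ I0) (hn0 : 1 ≤ n0)
    (hbudget : ∀ ℓ, ∑ I ∈ 𝓘, (((if I = I0 then n0 else 0) : ℕ) : ℝ) * c I ℓ ≤ B ℓ) :
    Feasible 𝓘 c B (Pi.single i 1) (fun I => if I = I0 then n0 else 0)
      (fun I => if I = I0 then Pi.single i 1 else 0) := by
  refine ⟨hbudget, fun I _ s hs => ?_, fun I _ h0 => ?_, ?_⟩
  · dsimp only
    split_ifs with hI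
    · exact Pi.single_eq_of_ne (by rintro rfl; exact hs (hI ▸ hi)) 1
    · rfl
  · dsimp only at h0 ⊢
    split_ifs at h0 ⊢ with hI
    · omega
    · rfl
  · rw [Finset.sum_ite_eq' 𝓘 I0, if_pos hI0]

lemma risk_single_group (A : Matrix (Fin k) (Fin k) ℝ) (hI0 : I0 ∈ 𝓘) (hn0 : 1 ≤ n0) :
    Risk A 𝓘 (fun I => if I = I0 then n0 else 0)
      (fun I => if I = I0 then Pi.single i 1 else 0) = A i i / n0 := by
  rw [Risk, Finset.sum_eq_single_of_mem I0 hI0 fun I _ hI => by simp [hI]]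
  simp [hn0, Matrix.mulVec_single, div_eq_inv_mul]

end SingleGroup

theorem stmt2_general (k : ℕ) (hk : 0 < k) (m : ℕ)
    (𝓘 : Finset (Finset (Fin k)))
    (c : Finset (Fin k) → Fin m → ℝ)
    (B : Fin m → ℝ)
    (Sig : Matrix (Fin k) (Fin k) ℝ) (hSig : Sig.PosDef)
    (γmin : ℝ) (hγmin : IsLeast (Set.range hSig.1.eigenvalues) γmin)
    (Sighat : Matrix (Fin k) (Fin k) ℝ)
    (hδ : opNorm (Sig - Sighat) ≤ γmin / 2)
    (I0 : Finset (Fin k)) (hI0 : I0 ∈ 𝓘) (h1I0 : (⟨0, hk⟩ : Fin k) ∈ I0)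
    (n0 : ℕ) (hn0 : 1 ≤ n0)
    (hbudget : ∀ ℓ : Fin m,
      ∑ I ∈ 𝓘, (((if I = I0 then n0 else 0) : ℕ) : ℝ) * c I ℓ ≤ B ℓ)
    (nhat : Finset (Fin k) → ℕ) (lamhat : Finset (Fin k) → (Fin k → ℝ))
    (hminhat : ∀ (n : Finset (Fin k) → ℕ) (lam : Finset (Fin k) → (Fin k → ℝ)),
      Feasible 𝓘 c B (Pi.single (⟨0, hk⟩ : Fin k) 1) n lam →
        Risk Sighat 𝓘 nhat lamhat ≤ Risk Sighat 𝓘 n lam)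
    (nstar : Finset (Fin k) → ℕ) (lamstar : Finset (Fin k) → (Fin k → ℝ))
    (hfeasstar : Feasible 𝓘 c B (Pi.single (⟨0, hk⟩ : Fin k) 1) nstar lamstar)
    (hminstar : ∀ (n : Finset (Fin k) → ℕ) (lam : Finset (Fin k) → (Fin k → ℝ)),
      Feasible 𝓘 c B (Pi.single (⟨0, hk⟩ : Fin k) 1) n lam →
        Risk Sig 𝓘 nstar lamstar ≤ Risk Sig 𝓘 n lam) :
    Risk Sig 𝓘 nhat lamhat ≤
      Risk Sig 𝓘 nstar lamstar +
        (4 * opNorm (Sig - Sighat) / γmin) * (Sig ⟨0, hk⟩ ⟨0, hk⟩ / (n0 : ℝ)) := by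
  set t := opNorm (Sig - Sighat) / γmin with ht_def
  have hγ : 0 < γmin := by
    obtain ⟨i, rfl⟩ := hγmin.1
    exact hSig.eigenvalues_pos i
  have ht0 : 0 ≤ t := div_nonneg (norm_nonneg _) hγ.le
  have ht_half : t ≤ 1 / 2 := by
    rw [ht_def, div_le_iff₀ hγ]
    linarith
  have hSig_ge : ∀ v, γmin * (v ⬝ᵥ v) ≤ v ⬝ᵥ (Sig *ᵥ v) :=
    mul_dotProduct_self_le_dotProduct_mulVec hSig.1 fun i => hγmin.2 ⟨i, rfl⟩
  have hSighat_ge : ∀ v, γmin / 2 * (v ⬝ᵥ v) ≤ v ⬝ᵥ (Sighat *ᵥ v) := fun v =>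
    (mul_le_mul_of_nonneg_right (by linarith) (dotProduct_self_star_nonneg v)).trans
      (sub_opNorm_mul_dotProduct_self_le hSig_ge Sighat v)
  have hhat : Risk Sig 𝓘 nhat lamhat ≤ (1 + 2 * t) * Risk Sighat 𝓘 nhat lamhat := by
    convert risk_le_one_add_div_mul_risk 𝓘 nhat lamhat (half_pos hγ) hSighat_ge using 3
    rw [ht_def]
    field_simp
  have hstar : Risk Sighat 𝓘 nstar lamstar ≤ (1 + t) * Risk Sig 𝓘 nstar lamstar := by
    have := risk_le_one_add_div_mul_risk (B := Sighat) 𝓘 nstar lamstar hγ hSig_ge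
    rwa [opNorm_sub_comm] at this
  have hclassical : Risk Sig 𝓘 nstar lamstar ≤ Sig ⟨0, hk⟩ ⟨0, hk⟩ / n0 :=
    (hminstar _ _ (feasible_single_group c B hI0 h1I0 hn0 hbudget)).trans_eq
      (risk_single_group Sig hI0 hn0)
  have hR : 0 ≤ Risk Sig 𝓘 nstar lamstar := risk_nonneg 𝓘 nstar lamstar hSig.posSemidef
  calc Risk Sig 𝓘 nhat lamhat ≤ (1 + 2 * t) * Risk Sighat 𝓘 nhat lamhat := hhat
    _ ≤ (1 + 2 * t) * Risk Sighat 𝓘 nstar lamstar :=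
        mul_le_mul_of_nonneg_left (hminhat nstar lamstar hfeasstar) (by linarith)
    _ ≤ (1 + 2 * t) * ((1 + t) * Risk Sig 𝓘 nstar lamstar) :=
        mul_le_mul_of_nonneg_left hstar (by linarith)
    _ ≤ Risk Sig 𝓘 nstar lamstar + 4 * t * Risk Sig 𝓘 nstar lamstar := by
        nlinarith [mul_nonneg (mul_nonneg ht0 (by linarith : 0 ≤ 1 / 2 - t)) hR]
    _ ≤ Risk Sig 𝓘 nstar lamstar + 4 * t * (Sig ⟨0, hk⟩ ⟨0, hk⟩ / n0) := by
        gcongr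
    _ = _ := by ring

theorem stmt2 (k : ℕ) (hk : 0 < k) (m : ℕ) (hm : 1 ≤ m)
    (𝓘 : Finset (Finset (Fin k))) (h𝓘 : ∀ I ∈ 𝓘, I.Nonempty)
    (c : Finset (Fin k) → Fin m → ℝ) (hc : ∀ I ∈ 𝓘, ∀ ℓ, 0 ≤ c I ℓ)
    (B : Fin m → ℝ) (hB : ∀ ℓ, 0 ≤ B ℓ)
    (Sig : Matrix (Fin k) (Fin k) ℝ) (hSig : Sig.PosDef)
    (γmin : ℝ) (hγmin : IsLeast (Set.range hSig.1.eigenvalues) γmin)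
    (Sighat : Matrix (Fin k) (Fin k) ℝ) (hSighat : Sighat.PosDef)
    (hδ : opNorm (Sig - Sighat) ≤ γmin / 2)
    (I0 : Finset (Fin k)) (hI0 : I0 ∈ 𝓘) (h1I0 : (⟨0, hk⟩ : Fin k) ∈ I0)
    (n0 : ℕ) (hn0 : 1 ≤ n0)
    (hbudget : ∀ ℓ : Fin m,
      ∑ I ∈ 𝓘, (((if I = I0 then n0 else 0) : ℕ) : ℝ) * c I ℓ ≤ B ℓ)
    (nhat : Finset (Fin k) → ℕ) (lamhat : Finset (Fin k) → (Fin k → ℝ))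
    (hfeashat : Feasible 𝓘 c B (Pi.single (⟨0, hk⟩ : Fin k) 1) nhat lamhat)
    (hminhat : ∀ (n : Finset (Fin k) → ℕ) (lam : Finset (Fin k) → (Fin k → ℝ)),
      Feasible 𝓘 c B (Pi.single (⟨0, hk⟩ : Fin k) 1) n lam →
        Risk Sighat 𝓘 nhat lamhat ≤ Risk Sighat 𝓘 n lam)
    (nstar : Finset (Fin k) → ℕ) (lamstar : Finset (Fin k) → (Fin k → ℝ))
    (hfeasstar : Feasible 𝓘 c B (Pi.single (⟨0, hk⟩ : Fin k) 1) nstar lamstar)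
    (hminstar : ∀ (n : Finset (Fin k) → ℕ) (lam : Finset (Fin k) → (Fin k → ℝ)),
      Feasible 𝓘 c B (Pi.single (⟨0, hk⟩ : Fin k) 1) n lam →
        Risk Sig 𝓘 nstar lamstar ≤ Risk Sig 𝓘 n lam) :
    Risk Sig 𝓘 nhat lamhat ≤
      Risk Sig 𝓘 nstar lamstar +
        (4 * opNorm (Sig - Sighat) / γmin) * (Sig ⟨0, hk⟩ ⟨0, hk⟩ / (n0 : ℝ)) :=
  stmt2_general k hk m 𝓘 c B Sig hSig γmin hγmin Sighat hδ I0 hI0 h1I0 n0 hn0 hbudget nhat lamhat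
    hminhat nstar lamstar hfeasstar hminstar
end

section
/- Let Σ be a symmetric positive definite k×k real matrix, let c_I > 0 for each I ∈ 𝓘, let B > 0, and let a ∈ ℝ^k be supported on ∪𝓘. Define V(a) as the infimum of Σ_{I∈𝓘 : n_I > 0} (1/n_I) λ_I^⊤ Σ λ_I over all real n_I ≥ 0 with Σ_{I∈𝓘} c_I n_I ≤ B and all families (λ_I) with λ_I ∈ ℝ^k supported on I, λ_I = 0 whenever n_I = 0, and Σ_{I∈𝓘} λ_I = a. Define U(a) as the infimum of Σ_{I∈𝓘} √(c_I)·‖λ_I‖_Σ over all families (λ_I) with λ_I supported on I and Σ_{I∈𝓘} λ_I = a. Then B·V(a) = U(a)². -/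
/-!
Both infima range over the same decompositions `λ` of `a`. For a fixed `λ`, write
`S(λ) = ∑ √c_I ‖λ_I‖_Σ`. Cauchy–Schwarz gives `S(λ)² ≤ (∑ c_I n_I)(∑ ‖λ_I‖²_Σ / n_I) ≤ B · cost`,
with equality for `n_I ∝ ‖λ_I‖_Σ / √c_I` scaled to exhaust the budget, so minimising over `n`
first leaves `inf_λ S(λ)² / B`. Finally `t ↦ t² / B` is continuous, monotone on `[0, ∞)` and
fixes `0`, so it commutes with `sInf` on sets of nonnegative reals, including the empty set.
-/

open Matrix

theorem Real.map_sInf_of_monotoneOn_Ici {f : ℝ → ℝ} (hf : Continuous f)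
    (hmono : MonotoneOn f (Set.Ici 0)) (hf0 : f 0 = 0) {T : Set ℝ} (hT : T ⊆ Set.Ici 0) :
    f (sInf T) = sInf (f '' T) := by
  rcases T.eq_empty_or_nonempty with rfl | hne
  · simp [hf0]
  · exact (hmono.mono hT).map_csInf_of_continuousWithinAt hf.continuousWithinAt hne
      ⟨0, fun _ hx ↦ hT hx⟩

section Allocation

variable {ι : Type*}

noncomputable def allocationCost (s : Finset ι) (n x : ι → ℝ) : ℝ :=
  ∑ i ∈ s, if 0 < n i then 1 / n i * x i else 0

variable {s : Finset ι} {c n x : ι → ℝ}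

theorem allocationCost_nonneg (hx : ∀ i ∈ s, 0 ≤ x i) : 0 ≤ allocationCost s n x := by
  refine Finset.sum_nonneg fun i hi ↦ ?_
  split_ifs with h
  · exact mul_nonneg (by positivity) (hx i hi)
  · exact le_rfl

/-- Cauchy–Schwarz: `√(c i x i) = √(c i n i) · √(x i / n i)`. -/
theorem sq_sum_sqrt_mul_sqrt_le_mul_allocationCost (hc : ∀ i ∈ s, 0 ≤ c i)
    (hn : ∀ i ∈ s, 0 ≤ n i) (hx : ∀ i ∈ s, 0 ≤ x i) (hnx : ∀ i ∈ s, n i = 0 → x i = 0) :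
    (∑ i ∈ s, √(c i) * √(x i)) ^ 2 ≤ (∑ i ∈ s, c i * n i) * allocationCost s n x := by
  refine Finset.sum_sq_le_sum_mul_sum_of_sq_le_mul s (fun i hi ↦ mul_nonneg (hc i hi) (hn i hi))
    (fun i hi ↦ ?_) fun i hi ↦ ?_
  · split_ifs with h
    · exact mul_nonneg (by positivity) (hx i hi)
    · exact le_rfl
  · rw [mul_pow, Real.sq_sqrt (hc i hi), Real.sq_sqrt (hx i hi)]
    refine le_of_eq ?_
    split_ifs with h
    · field_simp
    · simp [hnx i hi (le_antisymm (not_lt.1 h) (hn i hi))]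

theorem sq_sum_sqrt_mul_sqrt_div_le_allocationCost {B : ℝ} (hB : 0 < B) (hc : ∀ i ∈ s, 0 ≤ c i)
    (hn : ∀ i ∈ s, 0 ≤ n i) (hx : ∀ i ∈ s, 0 ≤ x i) (hnx : ∀ i ∈ s, n i = 0 → x i = 0)
    (hbudget : ∑ i ∈ s, c i * n i ≤ B) :
    (∑ i ∈ s, √(c i) * √(x i)) ^ 2 / B ≤ allocationCost s n x := by
  rw [div_le_iff₀' hB]
  exact (sq_sum_sqrt_mul_sqrt_le_mul_allocationCost hc hn hx hnx).trans
    (mul_le_mul_of_nonneg_right hbudget (allocationCost_nonneg hx))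

/-- Equality in Cauchy–Schwarz: the budget share of block `i` is taken proportional to
`√(x i / c i)`. -/
theorem exists_allocationCost_eq_sq_sum_sqrt_mul_sqrt_div {B : ℝ} (hB : 0 < B)
    (hc : ∀ i ∈ s, 0 < c i) (hx : ∀ i ∈ s, 0 ≤ x i) :
    ∃ n : ι → ℝ, (∀ i ∈ s, 0 ≤ n i) ∧ ∑ i ∈ s, c i * n i ≤ B ∧
      (∀ i ∈ s, n i = 0 → x i = 0) ∧
      allocationCost s n x = (∑ i ∈ s, √(c i) * √(x i)) ^ 2 / B := by
  set S := ∑ i ∈ s, √(c i) * √(x i) with hS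
  have hS0 : 0 ≤ S := Finset.sum_nonneg fun i _ ↦ by positivity
  rcases hS0.eq_or_lt with hSzero | hSpos
  · have hx0 : ∀ i ∈ s, x i = 0 := fun i hi ↦ by
      have h := (Finset.sum_eq_zero_iff_of_nonneg fun j _ ↦ by positivity).1 hSzero.symm i hi
      simpa [(Real.sqrt_pos.2 (hc i hi)).ne', Real.sqrt_eq_zero (hx i hi)] using h
    refine ⟨0, fun _ _ ↦ le_rfl, by simpa using hB.le, fun i hi _ ↦ hx0 i hi, ?_⟩
    simp [allocationCost, ← hSzero]
  refine ⟨fun i ↦ √(x i) * B / (√(c i) * S), fun i hi ↦ by positivity, ?_, fun i hi h ↦ ?_, ?_⟩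
  · have hterm : ∀ i ∈ s, c i * (√(x i) * B / (√(c i) * S)) = √(c i) * √(x i) * (B / S) :=
      fun i hi ↦ by
        have hci := Real.sqrt_pos.2 (hc i hi)
        field_simp
        rw [Real.sq_sqrt (hc i hi).le, mul_comm]
    rw [Finset.sum_congr rfl hterm, ← Finset.sum_mul, ← hS, mul_div_cancel₀ _ hSpos.ne']
  · have hden : √(c i) * S ≠ 0 := (mul_pos (Real.sqrt_pos.2 (hc i hi)) hSpos).ne'
    simpa [hden, hB.ne', Real.sqrt_eq_zero (hx i hi)] using h
  · have hterm : ∀ i ∈ s, (if 0 < √(x i) * B / (√(c i) * S) then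
        1 / (√(x i) * B / (√(c i) * S)) * x i else 0) = S / B * (√(c i) * √(x i)) := by
      intro i hi
      have hci := Real.sqrt_pos.2 (hc i hi)
      rcases (Real.sqrt_nonneg (x i)).eq_or_lt with hxi | hxi
      · simp [← hxi]
      rw [if_pos (by positivity)]
      field_simp
      rw [Real.sq_sqrt (hx i hi)]
    rw [allocationCost, Finset.sum_congr rfl hterm, ← Finset.mul_sum, ← hS]
    ring

end Allocation

theorem mul_sInf_eq_sq_sInf_of_forall_exists_le {U V : Set ℝ} {B : ℝ} (hB : 0 < B)
    (hU : U ⊆ Set.Ici 0) (hVU : ∀ v ∈ V, ∃ u ∈ U, u ^ 2 / B ≤ v)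
    (hUV : ∀ u ∈ U, ∃ v ∈ V, v ≤ u ^ 2 / B) :
    B * sInf V = sInf U ^ 2 := by
  have hmono : MonotoneOn (fun t : ℝ ↦ t ^ 2 / B) (Set.Ici 0) := fun s hs t _ hst ↦
    div_le_div_of_nonneg_right (pow_le_pow_left₀ hs hst 2) hB.le
  have hV : sInf V = sInf ((fun t ↦ t ^ 2 / B) '' U) :=
    csInf_eq_csInf_of_forall_exists_le (by simpa using hVU) (by simpa using hUV)
  rw [hV, ← Real.map_sInf_of_monotoneOn_Ici (by fun_prop) hmono (by simp) hU,
    mul_div_cancel₀ _ hB.ne']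

theorem stmt5_general (k : ℕ)
    (Sig : Matrix (Fin k) (Fin k) ℝ) (hSig : Sig.PosDef)
    (𝓘 : Finset (Finset (Fin k)))
    (c : Finset (Fin k) → ℝ) (hc : ∀ I ∈ 𝓘, 0 < c I)
    (B : ℝ) (hB : 0 < B)
    (a : Fin k → ℝ) :
    B * sInf {r : ℝ |
        ∃ (n : Finset (Fin k) → ℝ) (lam : Finset (Fin k) → (Fin k → ℝ)),
          (∀ I ∈ 𝓘, 0 ≤ n I) ∧
          (∑ I ∈ 𝓘, c I * n I ≤ B) ∧
          (∀ I ∈ 𝓘, ∀ s, s ∉ I → lam I s = 0) ∧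
          (∀ I ∈ 𝓘, n I = 0 → lam I = 0) ∧
          (∑ I ∈ 𝓘, lam I = a) ∧
          r = ∑ I ∈ 𝓘, if 0 < n I then (1 / n I) * (lam I ⬝ᵥ (Sig *ᵥ lam I)) else 0} =
      (sInf {r : ℝ |
        ∃ lam : Finset (Fin k) → (Fin k → ℝ),
          (∀ I ∈ 𝓘, ∀ s, s ∉ I → lam I s = 0) ∧
          (∑ I ∈ 𝓘, lam I = a) ∧
          r = ∑ I ∈ 𝓘, Real.sqrt (c I) * Real.sqrt (lam I ⬝ᵥ (Sig *ᵥ lam I))}) ^ 2 := by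
  set q : (Fin k → ℝ) → ℝ := fun v ↦ v ⬝ᵥ (Sig *ᵥ v)
  have hq_nonneg (v : Fin k → ℝ) : 0 ≤ q v := by
    simpa using hSig.posSemidef.dotProduct_mulVec_nonneg v
  have eq_zero_of_q_eq_zero {v : Fin k → ℝ} (hv : q v = 0) : v = 0 := by
    by_contra h
    exact (hSig.dotProduct_mulVec_pos h).ne' (by simpa using hv)
  refine mul_sInf_eq_sq_sInf_of_forall_exists_le hB ?_ ?_ ?_
  · rintro _ ⟨lam, -, -, rfl⟩
    exact Set.mem_Ici.2 (Finset.sum_nonneg fun I _ ↦ by positivity)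
  · rintro _ ⟨n, lam, hn, hbudget, hsupp, hn0, hsum, rfl⟩
    refine ⟨_, ⟨lam, hsupp, hsum, rfl⟩, ?_⟩
    exact sq_sum_sqrt_mul_sqrt_div_le_allocationCost (x := fun I ↦ q (lam I)) hB
      (fun I hI ↦ (hc I hI).le) hn (fun I _ ↦ hq_nonneg _) (fun I hI h ↦ by simp [q, hn0 I hI h])
      hbudget
  · rintro _ ⟨lam, hsupp, hsum, rfl⟩
    obtain ⟨n, hn, hbudget, hn0, hcost⟩ :=
      exists_allocationCost_eq_sq_sum_sqrt_mul_sqrt_div (x := fun I ↦ q (lam I)) hB hc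
        fun I _ ↦ hq_nonneg _
    exact ⟨_, ⟨n, lam, hn, hbudget, hsupp, fun I hI h ↦ eq_zero_of_q_eq_zero (hn0 I hI h), hsum,
      rfl⟩, hcost.le⟩

theorem stmt5 (k : ℕ) (hk : 1 ≤ k)
    (Sig : Matrix (Fin k) (Fin k) ℝ) (hSig : Sig.PosDef)
    (𝓘 : Finset (Finset (Fin k))) (h𝓘 : ∀ I ∈ 𝓘, I.Nonempty)
    (c : Finset (Fin k) → ℝ) (hc : ∀ I ∈ 𝓘, 0 < c I)
    (B : ℝ) (hB : 0 < B)
    (a : Fin k → ℝ) (ha : ∀ s, s ∉ 𝓘.sup id → a s = 0) :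
    B * sInf {r : ℝ |
        ∃ (n : Finset (Fin k) → ℝ) (lam : Finset (Fin k) → (Fin k → ℝ)),
          (∀ I ∈ 𝓘, 0 ≤ n I) ∧
          (∑ I ∈ 𝓘, c I * n I ≤ B) ∧
          (∀ I ∈ 𝓘, ∀ s, s ∉ I → lam I s = 0) ∧
          (∀ I ∈ 𝓘, n I = 0 → lam I = 0) ∧
          (∑ I ∈ 𝓘, lam I = a) ∧
          r = ∑ I ∈ 𝓘, if 0 < n I then (1 / n I) * (lam I ⬝ᵥ (Sig *ᵥ lam I)) else 0} =
      (sInf {r : ℝ |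
        ∃ lam : Finset (Fin k) → (Fin k → ℝ),
          (∀ I ∈ 𝓘, ∀ s, s ∉ I → lam I s = 0) ∧
          (∑ I ∈ 𝓘, lam I = a) ∧
          r = ∑ I ∈ 𝓘, Real.sqrt (c I) * Real.sqrt (lam I ⬝ᵥ (Sig *ᵥ lam I))}) ^ 2 :=
  stmt5_general k Sig hSig 𝓘 c hc B hB a
end

section
/- Let Σ be a symmetric positive definite k×k real matrix, let c_I > 0 for each I ∈ 𝓘, and let a ∈ ℝ^k be supported on ∪𝓘. Define U(a) as the infimum of Σ_{I∈𝓘} √(c_I)·‖λ_I‖_Σ over all families (λ_I) with λ_I ∈ ℝ^k supported on I and Σ_{I∈𝓘} λ_I = a. Then U(a) = sup{ a^⊤ y : y ∈ ℝ^k, y^⊤ Σ_I^† y ≤ c_I for every I ∈ 𝓘 }. -/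
/-!
Weak duality is Cauchy–Schwarz block by block: if `λ` is supported on `I`, then
`λ ⬝ᵥ y ≤ ‖λ‖_Σ · √(yᵀ Σ_I^† y)`. For the converse, `U` is positively homogeneous and, by the
triangle inequality for `‖·‖_Σ`, subadditive; Hahn–Banach yields a linear functional `x ↦ x ⬝ᵥ y`
with `a ⬝ᵥ y = U(a)` and `x ⬝ᵥ y ≤ U(x)`. Testing it on the one-block decomposition of
`λ = Σ_I^† y` gives `q ≤ √c_I · √q` for `q = yᵀ Σ_I^† y`, hence `q ≤ c_I`: `y` is feasible.
-/

open Matrix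

theorem exists_linearMap_eq_le_of_sublinear {E : Type*} [AddCommGroup E] [Module ℝ E]
    (N : E → ℝ) (N_hom : ∀ c : ℝ, 0 < c → ∀ x, N (c • x) = c * N x)
    (N_add : ∀ x y, N (x + y) ≤ N x + N y) (x : E) :
    ∃ g : E →ₗ[ℝ] ℝ, g x = N x ∧ ∀ z, g z ≤ N z := by
  have N_zero : N 0 = 0 := by
    have h := N_hom 2 two_pos 0
    rw [smul_zero] at h
    linarith
  have N_neg : 0 ≤ N x + N (-x) := by simpa [N_zero] using N_add x (-x)
  let f : E →ₗ.[ℝ] ℝ := LinearPMap.mkSpanSingleton' x (N x) fun c hc => by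
    rcases eq_or_ne c 0 with rfl | hc0
    · simp
    · rw [smul_eq_zero_iff_right hc0] at hc
      simp [hc, N_zero]
  obtain ⟨g, hgf, hgN⟩ := exists_extension_of_le_sublinear f N N_hom N_add <| by
    rintro ⟨_, hz⟩
    obtain ⟨t, rfl⟩ := Submodule.mem_span_singleton.1 hz
    rw [LinearPMap.mkSpanSingleton'_apply, RingHom.id_apply, smul_eq_mul]
    change t * N x ≤ N (t • x)
    rcases lt_trichotomy t 0 with ht | rfl | ht
    · rw [← neg_smul_neg, N_hom (-t) (neg_pos.2 ht)]
      nlinarith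
    · simp [N_zero]
    · rw [N_hom t ht]
  exact ⟨g, (hgf ⟨x, Submodule.mem_span_singleton_self x⟩).trans
    (LinearPMap.mkSpanSingleton'_apply_self _ _ _ _), hgN⟩

section QuadraticForm
variable {n : Type*} [Fintype n] {M : Matrix n n ℝ}

theorem Matrix.PosSemidef.inner_toInnerProductSpace (hM : M.PosSemidef) (x y : n → ℝ) :
    @inner ℝ _ (M.toInnerProductSpace hM).toInner x y = x ⬝ᵥ (M *ᵥ y) :=
  dotProduct_comm _ _

theorem Matrix.PosSemidef.dotProduct_mulVec_le_sqrt_mul_sqrt (hM : M.PosSemidef) (x y : n → ℝ) :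
    x ⬝ᵥ (M *ᵥ y) ≤ √(x ⬝ᵥ (M *ᵥ x)) * √(y ⬝ᵥ (M *ᵥ y)) := by
  let _ := M.toSeminormedAddCommGroup hM
  let _ := M.toInnerProductSpace hM
  have h := real_inner_le_norm x y
  simpa only [norm_eq_sqrt_re_inner (𝕜 := ℝ), RCLike.re_to_real,
    hM.inner_toInnerProductSpace] using h

theorem Matrix.PosSemidef.sqrt_dotProduct_mulVec_add_le (hM : M.PosSemidef) (x y : n → ℝ) :
    √((x + y) ⬝ᵥ (M *ᵥ (x + y))) ≤ √(x ⬝ᵥ (M *ᵥ x)) + √(y ⬝ᵥ (M *ᵥ y)) := by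
  let _ := M.toSeminormedAddCommGroup hM
  let _ := M.toInnerProductSpace hM
  have h := @norm_add_le _ (M.toSeminormedAddCommGroup hM).toSeminormedAddGroup x y
  simpa only [norm_eq_sqrt_re_inner (𝕜 := ℝ), RCLike.re_to_real,
    hM.inner_toInnerProductSpace] using h

theorem sqrt_dotProduct_mulVec_smul (M : Matrix n n ℝ) (t : ℝ) (x : n → ℝ) :
    √((t • x) ⬝ᵥ (M *ᵥ (t • x))) = |t| * √(x ⬝ᵥ (M *ᵥ x)) := by
  rw [mulVec_smul, dotProduct_smul, smul_dotProduct, smul_smul, smul_eq_mul, ← sq,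
    Real.sqrt_mul (sq_nonneg t), Real.sqrt_sq_eq_abs]

end QuadraticForm

section CoordProj
variable {n : Type*} [DecidableEq n] (I : Finset n)

def coordProj : Matrix n n ℝ :=
  diagonal fun s => if s ∈ I then 1 else 0

@[simp]
theorem coordProj_transpose : (coordProj I)ᵀ = coordProj I := diagonal_transpose _

theorem posSemidef_coordProj [Fintype n] : (coordProj I).PosSemidef :=
  PosSemidef.diagonal fun s => by dsimp only [Pi.zero_apply]; split_ifs <;> norm_num

variable [Fintype n]

theorem coordProj_mulVec_apply (x : n → ℝ) (s : n) :
    (coordProj I *ᵥ x) s = if s ∈ I then x s else 0 := by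
  simp [coordProj, mulVec_diagonal]

theorem coordProj_mulVec_eq_self_iff {x : n → ℝ} :
    coordProj I *ᵥ x = x ↔ ∀ s ∉ I, x s = 0 := by
  simp only [funext_iff, coordProj_mulVec_apply]
  refine ⟨fun h s hs => by simpa [hs] using (h s).symm, fun h s => ?_⟩
  split_ifs with hs
  · rfl
  · exact (h s hs).symm

@[simp]
theorem coordProj_mul_self : coordProj I * coordProj I = coordProj I := by
  simp [coordProj, diagonal_mul_diagonal]

theorem one_sub_coordProj : 1 - coordProj I = coordProj Iᶜ := by
  ext s t
  by_cases hst : s = t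
  · subst hst
    by_cases hs : s ∈ I <;> simp [coordProj, hs]
  · simp [coordProj, hst]

theorem dotProduct_coordProj_mul_mul_mulVec (A : Matrix n n ℝ) (x : n → ℝ) :
    x ⬝ᵥ ((coordProj I * A * coordProj I) *ᵥ x) =
      (coordProj I *ᵥ x) ⬝ᵥ (A *ᵥ (coordProj I *ᵥ x)) := by
  rw [← mulVec_mulVec, ← mulVec_mulVec, dotProduct_mulVec, ← mulVec_transpose,
    coordProj_transpose]

end CoordProj

theorem restrict_eq_coordProj_mul_mul {k : ℕ} (A : Matrix (Fin k) (Fin k) ℝ) (I : Finset (Fin k)) :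
    restrict A I = coordProj I * A * coordProj I := by
  ext s t
  by_cases hs : s ∈ I <;> by_cases ht : t ∈ I <;> simp [restrict, coordProj, hs, ht]

section Penrose
variable {n : Type*} [Fintype n]

theorem eq_of_penrose {A B C : Matrix n n ℝ}
    (hB₁ : A * B * A = A) (hB₂ : B * A * B = B) (hB₃ : (A * B)ᵀ = A * B) (hB₄ : (B * A)ᵀ = B * A)
    (hC₁ : A * C * A = A) (hC₂ : C * A * C = C) (hC₃ : (A * C)ᵀ = A * C)
    (hC₄ : (C * A)ᵀ = C * A) : B = C := by
  have hAB : A * B = A * C := calc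
    A * B = (A * C) * (A * B) := by rw [← Matrix.mul_assoc, hC₁]
    _ = ((A * B) * (A * C))ᵀ := by rw [transpose_mul, hB₃, hC₃]
    _ = A * C := by rw [← Matrix.mul_assoc, hB₁, hC₃]
  have hBA : B * A = C * A := calc
    B * A = (B * A) * (C * A) := by rw [Matrix.mul_assoc, ← Matrix.mul_assoc A, hC₁]
    _ = ((C * A) * (B * A))ᵀ := by rw [transpose_mul, hB₄, hC₄]
    _ = C * A := by rw [Matrix.mul_assoc, ← Matrix.mul_assoc A, hB₁, hC₄]
  calc B = B * A * B := hB₂.symm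
    _ = C * A * C := by rw [hBA, Matrix.mul_assoc, hAB, ← Matrix.mul_assoc]
    _ = C := hC₂

theorem pinv_eq_of_penrose [DecidableEq n] {A B : Matrix n n ℝ}
    (h₁ : A * B * A = A) (h₂ : B * A * B = B) (h₃ : (A * B)ᵀ = A * B) (h₄ : (B * A)ᵀ = B * A) :
    pinv A = B := by
  have hex : ∃ B : Matrix n n ℝ,
      A * B * A = A ∧ B * A * B = B ∧ (A * B)ᵀ = A * B ∧ (B * A)ᵀ = B * A :=
    ⟨B, h₁, h₂, h₃, h₄⟩
  rw [pinv, dif_pos hex]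
  obtain ⟨e₁, e₂, e₃, e₄⟩ := hex.choose_spec
  exact eq_of_penrose e₁ e₂ e₃ e₄ h₁ h₂ h₃ h₄

end Penrose

section Regularization
variable {n : Type*} [Fintype n] [DecidableEq n] (A : Matrix n n ℝ) (I : Finset n)

/-- The singular matrix `coordProj I * A * coordProj I` completed by the identity off `I`: it is
invertible, commutes with `coordProj I` and agrees with `A` on vectors supported on `I`, so that
`pinv (coordProj I * A * coordProj I) = coordProj I * (regularizedRestrict A I)⁻¹`. -/
def regularizedRestrict : Matrix n n ℝ :=
  coordProj I * A * coordProj I + (1 - coordProj I)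

theorem coordProj_mul_regularizedRestrict :
    coordProj I * regularizedRestrict A I = coordProj I * A * coordProj I := by
  simp [regularizedRestrict, Matrix.mul_add, Matrix.mul_sub, ← Matrix.mul_assoc]

theorem regularizedRestrict_mul_coordProj :
    regularizedRestrict A I * coordProj I = coordProj I * A * coordProj I := by
  simp [regularizedRestrict, Matrix.add_mul, Matrix.sub_mul, Matrix.mul_assoc]

theorem dotProduct_regularizedRestrict_mulVec {v : n → ℝ} (hv : coordProj I *ᵥ v = v) :
    v ⬝ᵥ (regularizedRestrict A I *ᵥ v) = v ⬝ᵥ (A *ᵥ v) := by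
  have hMv : regularizedRestrict A I *ᵥ v = (coordProj I * A * coordProj I) *ᵥ v := by
    rw [← regularizedRestrict_mul_coordProj, ← mulVec_mulVec, hv]
  rw [hMv, dotProduct_coordProj_mul_mul_mulVec, hv]

theorem posDef_regularizedRestrict {A : Matrix n n ℝ} (hA : A.PosDef) :
    (regularizedRestrict A I).PosDef := by
  have hDAD : (coordProj I * A * coordProj I).PosSemidef := by
    simpa [conjTranspose_eq_transpose_of_trivial] using
      hA.posSemidef.conjTranspose_mul_mul_same (coordProj I)
  refine PosDef.of_dotProduct_mulVec_pos
    (hDAD.add (one_sub_coordProj I ▸ posSemidef_coordProj Iᶜ)).isHermitian ?_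
  intro x hx
  rw [star_trivial, regularizedRestrict, add_mulVec, dotProduct_add,
    dotProduct_coordProj_mul_mul_mulVec]
  by_cases hDx : coordProj I *ᵥ x = 0
  · simpa [sub_mulVec, hDx] using dotProduct_star_self_pos_iff.2 hx
  · have h₁ := hA.dotProduct_mulVec_pos hDx
    have h₂ := (posSemidef_coordProj Iᶜ).dotProduct_mulVec_nonneg x
    rw [star_trivial] at h₁ h₂
    rw [one_sub_coordProj]
    linarith

theorem pinv_eq_of_mul_eq_of_idempotent {A D M : Matrix n n ℝ} (hM : IsUnit M.det)
    (hD : D * D = D) (hDt : Dᵀ = D) (hDM : D * M = A) (hMD : M * D = A) :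
    pinv A = D * M⁻¹ := by
  have hMinv : D * M⁻¹ = M⁻¹ * D := calc
    D * M⁻¹ = M⁻¹ * (M * D) * M⁻¹ := by
      rw [← Matrix.mul_assoc, nonsing_inv_mul _ hM, Matrix.one_mul]
    _ = M⁻¹ * D := by
      rw [hMD, ← hDM, Matrix.mul_assoc, Matrix.mul_assoc, mul_nonsing_inv _ hM, Matrix.mul_one]
  have hAB : A * (D * M⁻¹) = D := by
    rw [← hDM, hMinv, Matrix.mul_assoc, ← Matrix.mul_assoc M, mul_nonsing_inv _ hM,
      Matrix.one_mul, hD]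
  have hBA : D * M⁻¹ * A = D := by
    rw [← hMD, Matrix.mul_assoc, ← Matrix.mul_assoc M⁻¹, nonsing_inv_mul _ hM, Matrix.one_mul, hD]
  refine pinv_eq_of_penrose ?_ ?_ (by rw [hAB, hDt]) (by rw [hBA, hDt])
  · rw [hAB, ← hDM, ← Matrix.mul_assoc, hD]
  · rw [hBA, ← Matrix.mul_assoc, hD]

theorem pinv_coordProj_mul_mul {A : Matrix n n ℝ} (hA : A.PosDef) :
    pinv (coordProj I * A * coordProj I) = coordProj I * (regularizedRestrict A I)⁻¹ :=
  pinv_eq_of_mul_eq_of_idempotent (posDef_regularizedRestrict I hA).det_pos.ne'.isUnit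
    (coordProj_mul_self I) (coordProj_transpose I) (coordProj_mul_regularizedRestrict A I)
    (regularizedRestrict_mul_coordProj A I)

end Regularization

section BlockDuality
variable {n : Type*} [Fintype n] [DecidableEq n] {A : Matrix n n ℝ} (hA : A.PosDef) (I : Finset n)
include hA

theorem coordProj_mulVec_pinv_mulVec (y : n → ℝ) :
    coordProj I *ᵥ (pinv (coordProj I * A * coordProj I) *ᵥ y) =
      pinv (coordProj I * A * coordProj I) *ᵥ y := by
  rw [pinv_coordProj_mul_mul I hA, mulVec_mulVec, ← Matrix.mul_assoc, coordProj_mul_self]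

theorem dotProduct_regularizedRestrict_mulVec_pinv_mulVec {v : n → ℝ}
    (hv : coordProj I *ᵥ v = v) (y : n → ℝ) :
    v ⬝ᵥ (regularizedRestrict A I *ᵥ (pinv (coordProj I * A * coordProj I) *ᵥ y)) = v ⬝ᵥ y := by
  have hM := (posDef_regularizedRestrict I hA).det_pos.ne'.isUnit
  rw [pinv_coordProj_mul_mul I hA, mulVec_mulVec, ← Matrix.mul_assoc,
    regularizedRestrict_mul_coordProj, ← coordProj_mul_regularizedRestrict, Matrix.mul_assoc,
    mul_nonsing_inv _ hM, Matrix.mul_one, dotProduct_mulVec, ← mulVec_transpose,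
    coordProj_transpose, hv]

theorem dotProduct_le_sqrt_mul_sqrt_pinv {v : n → ℝ} (hv : coordProj I *ᵥ v = v) (y : n → ℝ) :
    v ⬝ᵥ y ≤ √(v ⬝ᵥ (A *ᵥ v)) * √(y ⬝ᵥ (pinv (coordProj I * A * coordProj I) *ᵥ y)) := by
  set w := pinv (coordProj I * A * coordProj I) *ᵥ y
  have hw : coordProj I *ᵥ w = w := coordProj_mulVec_pinv_mulVec hA I y
  calc v ⬝ᵥ y = v ⬝ᵥ (regularizedRestrict A I *ᵥ w) :=
        (dotProduct_regularizedRestrict_mulVec_pinv_mulVec hA I hv y).symm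
    _ ≤ √(v ⬝ᵥ (regularizedRestrict A I *ᵥ v)) * √(w ⬝ᵥ (regularizedRestrict A I *ᵥ w)) :=
        (posDef_regularizedRestrict I hA).posSemidef.dotProduct_mulVec_le_sqrt_mul_sqrt v w
    _ = √(v ⬝ᵥ (A *ᵥ v)) * √(y ⬝ᵥ w) := by
      rw [dotProduct_regularizedRestrict_mulVec A I hv,
        dotProduct_regularizedRestrict_mulVec_pinv_mulVec hA I hw, dotProduct_comm w y]

theorem exists_dotProduct_eq_pinv_quadratic (y : n → ℝ) :
    ∃ v : n → ℝ, coordProj I *ᵥ v = v ∧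
      v ⬝ᵥ y = y ⬝ᵥ (pinv (coordProj I * A * coordProj I) *ᵥ y) ∧
      v ⬝ᵥ (A *ᵥ v) = y ⬝ᵥ (pinv (coordProj I * A * coordProj I) *ᵥ y) := by
  set w := pinv (coordProj I * A * coordProj I) *ᵥ y
  have hw : coordProj I *ᵥ w = w := coordProj_mulVec_pinv_mulVec hA I y
  refine ⟨w, hw, dotProduct_comm _ _, ?_⟩
  rw [← dotProduct_regularizedRestrict_mulVec A I hw,
    dotProduct_regularizedRestrict_mulVec_pinv_mulVec hA I hw, dotProduct_comm]

end BlockDuality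

theorem le_of_le_sqrt_mul_sqrt {q c : ℝ} (hc : 0 ≤ c) (h : q ≤ √c * √q) : q ≤ c := by
  rcases le_or_gt q 0 with hq | hq
  · exact hq.trans hc
  · have hsq : √q * √q ≤ √c * √q := by rwa [Real.mul_self_sqrt hq.le]
    exact (Real.sqrt_le_sqrt_iff hc).1 (le_of_mul_le_mul_right hsq (Real.sqrt_pos.2 hq))

section LatentNorm
open scoped Pointwise

variable {n : Type*} [Fintype n] (Sig : Matrix n n ℝ) (𝓘 : Finset (Finset n))
  (c : Finset n → ℝ)

def latentCosts (b : n → ℝ) : Set ℝ :=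
  {r : ℝ | ∃ lam : Finset n → (n → ℝ),
    (∀ I ∈ 𝓘, ∀ s, s ∉ I → lam I s = 0) ∧
    (∑ I ∈ 𝓘, lam I = b) ∧
    r = ∑ I ∈ 𝓘, Real.sqrt (c I) * Real.sqrt (lam I ⬝ᵥ (Sig *ᵥ lam I))}

/-- The paper's `U(b)`; it is `sInf ∅ = 0` unless `b` is supported on `⋃ 𝓘`. -/
noncomputable def latentNorm (b : n → ℝ) : ℝ :=
  sInf (latentCosts Sig 𝓘 c b)

variable {Sig 𝓘 c}

theorem nonneg_of_mem_latentCosts {b : n → ℝ} {r : ℝ} (hr : r ∈ latentCosts Sig 𝓘 c b) :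
    0 ≤ r := by
  obtain ⟨lam, -, -, rfl⟩ := hr
  exact Finset.sum_nonneg fun I _ => by positivity

theorem bddBelow_latentCosts (b : n → ℝ) : BddBelow (latentCosts Sig 𝓘 c b) :=
  ⟨0, fun _ => nonneg_of_mem_latentCosts⟩

theorem zero_mem_latentCosts : (0 : ℝ) ∈ latentCosts Sig 𝓘 c 0 :=
  ⟨0, by simp, by simp, by simp⟩

theorem mul_sqrt_mem_latentCosts {I : Finset n} (hI : I ∈ 𝓘) {v : n → ℝ}
    (hv : ∀ s ∉ I, v s = 0) : √(c I) * √(v ⬝ᵥ (Sig *ᵥ v)) ∈ latentCosts Sig 𝓘 c v := by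
  classical
  refine ⟨Pi.single I v, fun J _ s hs => ?_, by simp [Finset.sum_pi_single', hI], ?_⟩
  · rcases eq_or_ne J I with rfl | hJ
    · simpa using hv s hs
    · simp [hJ]
  · rw [Finset.sum_eq_single_of_mem I hI fun J _ hJ => by simp [hJ], Pi.single_eq_same]

theorem abs_mul_mem_latentCosts_smul {b : n → ℝ} {r : ℝ} (hr : r ∈ latentCosts Sig 𝓘 c b)
    (t : ℝ) : |t| * r ∈ latentCosts Sig 𝓘 c (t • b) := by
  obtain ⟨lam, hlam, rfl, rfl⟩ := hr
  refine ⟨fun I => t • lam I, fun I hI s hs => by simp [hlam I hI s hs], Finset.smul_sum.symm, ?_⟩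
  simp only [Finset.mul_sum, sqrt_dotProduct_mulVec_smul]
  exact Finset.sum_congr rfl fun I _ => by ring

theorem exists_mem_latentCosts_add_le (hSig : Sig.PosSemidef) {b b' : n → ℝ} {r r' : ℝ}
    (hr : r ∈ latentCosts Sig 𝓘 c b) (hr' : r' ∈ latentCosts Sig 𝓘 c b') :
    ∃ r'' ∈ latentCosts Sig 𝓘 c (b + b'), r'' ≤ r + r' := by
  obtain ⟨lam, hlam, rfl, rfl⟩ := hr
  obtain ⟨lam', hlam', rfl, rfl⟩ := hr'
  refine ⟨_, ⟨lam + lam', fun I hI s hs => by simp [hlam I hI s hs, hlam' I hI s hs],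
    Finset.sum_add_distrib, rfl⟩, ?_⟩
  rw [← Finset.sum_add_distrib]
  refine Finset.sum_le_sum fun I _ => ?_
  rw [← mul_add]
  exact mul_le_mul_of_nonneg_left (hSig.sqrt_dotProduct_mulVec_add_le _ _) (Real.sqrt_nonneg _)

theorem latentCosts_nonempty [DecidableEq n] {b : n → ℝ} (hb : ∀ s ∉ 𝓘.sup id, b s = 0) :
    (latentCosts Sig 𝓘 c b).Nonempty := by
  rw [← Finset.univ_sum_single b]
  refine Finset.sum_induction _ (fun x => (latentCosts Sig 𝓘 c x).Nonempty) ?_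
    ⟨0, zero_mem_latentCosts⟩ fun s _ => ?_
  · rintro _ _ ⟨_, lam, hlam, rfl, rfl⟩ ⟨_, lam', hlam', rfl, rfl⟩
    exact ⟨_, lam + lam', fun I hI s hs => by simp [hlam I hI s hs, hlam' I hI s hs],
      Finset.sum_add_distrib, rfl⟩
  · by_cases hs : s ∈ 𝓘.sup id
    · obtain ⟨I, hI, hsI⟩ := Finset.mem_sup.1 hs
      exact ⟨_, mul_sqrt_mem_latentCosts hI fun t ht =>
        Pi.single_eq_of_ne (ne_of_mem_of_not_mem hsI ht).symm _⟩
    · rw [hb s hs, Pi.single_zero]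
      exact ⟨0, zero_mem_latentCosts⟩

theorem latentNorm_smul {t : ℝ} (ht : 0 < t) (b : n → ℝ) :
    latentNorm Sig 𝓘 c (t • b) = t * latentNorm Sig 𝓘 c b := by
  have hset : latentCosts Sig 𝓘 c (t • b) = t • latentCosts Sig 𝓘 c b := by
    ext r
    refine ⟨fun hr => ⟨t⁻¹ * r, ?_, ?_⟩, ?_⟩
    · simpa [abs_of_pos ht, smul_smul, ht.ne'] using abs_mul_mem_latentCosts_smul hr t⁻¹
    · simp [ht.ne']
    · rintro ⟨r, hr, rfl⟩
      simpa [abs_of_pos ht] using abs_mul_mem_latentCosts_smul hr t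
  rw [latentNorm, hset, Real.sInf_smul_of_nonneg ht.le, smul_eq_mul, latentNorm]

theorem latentNorm_add_le (hSig : Sig.PosSemidef) {b b' : n → ℝ}
    (hb : (latentCosts Sig 𝓘 c b).Nonempty) (hb' : (latentCosts Sig 𝓘 c b').Nonempty) :
    latentNorm Sig 𝓘 c (b + b') ≤ latentNorm Sig 𝓘 c b + latentNorm Sig 𝓘 c b' := by
  rw [latentNorm, latentNorm, latentNorm,
    ← csInf_add hb (bddBelow_latentCosts b) hb' (bddBelow_latentCosts b')]
  refine le_csInf (hb.add hb') ?_
  rintro _ ⟨r, hr, r', hr', rfl⟩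
  obtain ⟨r'', hr'', hle⟩ := exists_mem_latentCosts_add_le hSig hr hr'
  exact (csInf_le (bddBelow_latentCosts _) hr'').trans hle

end LatentNorm

section Duality
variable {n : Type*} [Fintype n] [DecidableEq n] {Sig : Matrix n n ℝ} (hSig : Sig.PosDef)
  {𝓘 : Finset (Finset n)} {c : Finset n → ℝ}
include hSig

theorem dotProduct_le_of_mem_latentCosts {y : n → ℝ}
    (hy : ∀ I ∈ 𝓘, y ⬝ᵥ (pinv (coordProj I * Sig * coordProj I) *ᵥ y) ≤ c I)
    {b : n → ℝ} {r : ℝ} (hr : r ∈ latentCosts Sig 𝓘 c b) : b ⬝ᵥ y ≤ r := by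
  obtain ⟨lam, hlam, rfl, rfl⟩ := hr
  rw [sum_dotProduct]
  refine Finset.sum_le_sum fun I hI => ?_
  calc lam I ⬝ᵥ y
      ≤ √(lam I ⬝ᵥ (Sig *ᵥ lam I)) * √(y ⬝ᵥ (pinv (coordProj I * Sig * coordProj I) *ᵥ y)) :=
        dotProduct_le_sqrt_mul_sqrt_pinv hSig I ((coordProj_mulVec_eq_self_iff I).2 (hlam I hI)) y
    _ ≤ √(lam I ⬝ᵥ (Sig *ᵥ lam I)) * √(c I) := by gcongr; exact hy I hI
    _ = √(c I) * √(lam I ⬝ᵥ (Sig *ᵥ lam I)) := mul_comm _ _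

theorem exists_dotProduct_eq_latentNorm (hc : ∀ I ∈ 𝓘, 0 ≤ c I) {b : n → ℝ}
    (hb : ∀ s ∉ 𝓘.sup id, b s = 0) :
    ∃ y : n → ℝ, (∀ I ∈ 𝓘, y ⬝ᵥ (pinv (coordProj I * Sig * coordProj I) *ᵥ y) ≤ c I) ∧
      b ⬝ᵥ y = latentNorm Sig 𝓘 c b := by
  set T := 𝓘.sup id
  have hT {v : n → ℝ} : coordProj T *ᵥ v = v ↔ ∀ s ∉ T, v s = 0 := coordProj_mulVec_eq_self_iff T
  have hne (x : n → ℝ) : (latentCosts Sig 𝓘 c (coordProj T *ᵥ x)).Nonempty :=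
    latentCosts_nonempty fun s hs => by rw [coordProj_mulVec_apply, if_neg hs]
  -- `latentNorm` is not subadditive off vectors supported on `T`; projecting onto `T` first
  -- makes it sublinear on the whole space.
  obtain ⟨g, hgb, hgN⟩ := exists_linearMap_eq_le_of_sublinear
    (fun x => latentNorm Sig 𝓘 c (coordProj T *ᵥ x))
    (fun t ht x => by simp only [mulVec_smul]; exact latentNorm_smul ht _)
    (fun x x' => by
      simp only [mulVec_add]
      exact latentNorm_add_le hSig.posSemidef (hne x) (hne x'))
    b
  set y := (dotProductEquiv ℝ n).symm g
  have hgy (x : n → ℝ) : g x = x ⬝ᵥ y := by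
    rw [dotProduct_comm, ← dotProductEquiv_apply_apply, LinearEquiv.apply_symm_apply]
  refine ⟨y, fun I hI => le_of_le_sqrt_mul_sqrt (hc I hI) ?_, by rw [← hgy, hgb, hT.2 hb]⟩
  obtain ⟨v, hv, hvy, hvSig⟩ := exists_dotProduct_eq_pinv_quadratic hSig I y
  have hvI := (coordProj_mulVec_eq_self_iff I).1 hv
  have hvT : coordProj T *ᵥ v = v :=
    hT.2 fun s hs => hvI s fun hsI => hs (Finset.le_sup (f := id) hI hsI)
  calc y ⬝ᵥ (pinv (coordProj I * Sig * coordProj I) *ᵥ y) = g v := by rw [hgy, hvy]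
    _ ≤ latentNorm Sig 𝓘 c v := by simpa only [hvT] using hgN v
    _ ≤ √(c I) * √(v ⬝ᵥ (Sig *ᵥ v)) :=
      csInf_le (bddBelow_latentCosts v) (mul_sqrt_mem_latentCosts hI hvI)
    _ = _ := by rw [hvSig]

end Duality

theorem stmt6_general (k : ℕ)
    (Sig : Matrix (Fin k) (Fin k) ℝ) (hSig : Sig.PosDef)
    (𝓘 : Finset (Finset (Fin k)))
    (c : Finset (Fin k) → ℝ) (hc : ∀ I ∈ 𝓘, 0 < c I)
    (a : Fin k → ℝ) (ha : ∀ s, s ∉ 𝓘.sup id → a s = 0) :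
    sInf {r : ℝ |
        ∃ lam : Finset (Fin k) → (Fin k → ℝ),
          (∀ I ∈ 𝓘, ∀ s, s ∉ I → lam I s = 0) ∧
          (∑ I ∈ 𝓘, lam I = a) ∧
          r = ∑ I ∈ 𝓘, Real.sqrt (c I) * Real.sqrt (lam I ⬝ᵥ (Sig *ᵥ lam I))} =
      sSup {r : ℝ |
        ∃ y : Fin k → ℝ,
          (∀ I ∈ 𝓘, y ⬝ᵥ (pinv (restrict Sig I) *ᵥ y) ≤ c I) ∧
          r = a ⬝ᵥ y} := by
  simp only [restrict_eq_coordProj_mul_mul]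
  change latentNorm Sig 𝓘 c a = _
  have hub : ∀ q ∈ {r : ℝ | ∃ y : Fin k → ℝ,
      (∀ I ∈ 𝓘, y ⬝ᵥ (pinv (coordProj I * Sig * coordProj I) *ᵥ y) ≤ c I) ∧ r = a ⬝ᵥ y},
      q ≤ latentNorm Sig 𝓘 c a := by
    rintro _ ⟨y, hy, rfl⟩
    exact le_csInf (latentCosts_nonempty ha) fun r => dotProduct_le_of_mem_latentCosts hSig hy
  obtain ⟨y, hy, hya⟩ := exists_dotProduct_eq_latentNorm hSig (fun I hI => (hc I hI).le) ha
  refine le_antisymm ?_ (csSup_le ⟨_, y, hy, rfl⟩ hub)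
  rw [← hya]
  exact le_csSup ⟨_, hub⟩ ⟨y, hy, rfl⟩

theorem stmt6 (k : ℕ) (hk : 1 ≤ k)
    (Sig : Matrix (Fin k) (Fin k) ℝ) (hSig : Sig.PosDef)
    (𝓘 : Finset (Finset (Fin k))) (h𝓘 : ∀ I ∈ 𝓘, I.Nonempty)
    (c : Finset (Fin k) → ℝ) (hc : ∀ I ∈ 𝓘, 0 < c I)
    (a : Fin k → ℝ) (ha : ∀ s, s ∉ 𝓘.sup id → a s = 0) :
    sInf {r : ℝ |
        ∃ lam : Finset (Fin k) → (Fin k → ℝ),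
          (∀ I ∈ 𝓘, ∀ s, s ∉ I → lam I s = 0) ∧
          (∑ I ∈ 𝓘, lam I = a) ∧
          r = ∑ I ∈ 𝓘, Real.sqrt (c I) * Real.sqrt (lam I ⬝ᵥ (Sig *ᵥ lam I))} =
      sSup {r : ℝ |
        ∃ y : Fin k → ℝ,
          (∀ I ∈ 𝓘, y ⬝ᵥ (pinv (restrict Sig I) *ᵥ y) ≤ c I) ∧
          r = a ⬝ᵥ y} :=
  stmt6_general k Sig hSig 𝓘 c hc a ha
end

section
/- Let 𝓙 be a finite family of subsets of {1,…,k} and, for each I ∈ 𝓙, let M_I be a symmetric positive semidefinite k×k real matrix such that (M_I)_{st} = 0 unless both s ∈ I and t ∈ I, and such that x^⊤ M_I x > 0 for every nonzero x ∈ ℝ^k supported on I. Then the range of Σ_{I∈𝓙} M_I equals the span of {e_i : i ∈ ∪𝓙}, where e_i are the standard basis vectors of ℝ^k. -/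
open Matrix

/-!
Every row of `A = ∑ M_I` outside `S = ⋃ 𝓙` vanishes, so `A` maps into the coordinate subspace
`V` of vectors supported on `S`. If `x ∈ V` and `A x = 0`, then `∑ xᵀ M_I x = xᵀ A x = 0`, and
positive semidefiniteness forces every `xᵀ M_I x = 0`. As `M_I` lives on `I × I`, the quadratic
form of `M_I` only sees the restriction of `x` to `I`, which must therefore vanish by positive
definiteness on `I`. Hence `A` is injective on the finite-dimensional space `V`, so it maps `V`
onto `V`.
-/

theorem LinearMap.range_eq_of_le_of_disjoint_ker {K V : Type*} [DivisionRing K]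
    [AddCommGroup V] [Module K V] {f : V →ₗ[K] V} {p : Submodule K V} [FiniteDimensional K p]
    (hle : LinearMap.range f ≤ p) (hker : Disjoint p (LinearMap.ker f)) :
    LinearMap.range f = p := by
  refine le_antisymm hle fun v hv => ?_
  have hmaps : ∀ x ∈ p, f x ∈ p := fun x _ => hle (LinearMap.mem_range_self f x)
  have hinj : Function.Injective (f.restrict hmaps) :=
    (LinearMap.injective_restrict_iff hmaps).mpr hker
  obtain ⟨w, hw⟩ := LinearMap.injective_iff_surjective.mp hinj ⟨v, hv⟩
  exact ⟨w, congrArg Subtype.val hw⟩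

section Support

variable {ι R : Type*} [Fintype ι]

theorem Pi.mem_span_single_one_image_iff [DecidableEq ι] [Semiring R] {s : Set ι} {x : ι → R} :
    x ∈ Submodule.span R ((fun i => Pi.single i 1) '' s) ↔ ∀ i ∉ s, x i = 0 := by
  simp only [← Pi.basisFun_apply, Module.Basis.mem_span_image, Set.subset_def, Finset.mem_coe,
    Finsupp.mem_support_iff, Pi.basisFun_repr]
  exact forall_congr' fun i => not_imp_comm

theorem Matrix.range_mulVecLin_le_span_single [DecidableEq ι] [CommSemiring R]
    {A : Matrix ι ι R} {s : Set ι}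
    (h : ∀ i ∉ s, ∀ j, A i j = 0) :
    LinearMap.range A.mulVecLin ≤ Submodule.span R ((fun i => Pi.single i 1) '' s) := by
  rintro _ ⟨w, rfl⟩
  rw [Pi.mem_span_single_one_image_iff]
  intro i hi
  simp [mulVec, dotProduct, h i hi]

theorem Matrix.indicator_dotProduct_mulVec_indicator [CommSemiring R] {M : Matrix ι ι R}
    {I : Set ι} (h : ∀ s t, ¬(s ∈ I ∧ t ∈ I) → M s t = 0) (x : ι → R) :
    I.indicator x ⬝ᵥ M *ᵥ I.indicator x = x ⬝ᵥ M *ᵥ x := by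
  simp only [dotProduct, mulVec, Finset.mul_sum]
  refine Finset.sum_congr rfl fun s _ => Finset.sum_congr rfl fun t _ => ?_
  by_cases hs : s ∈ I <;> by_cases ht : t ∈ I <;> simp [hs, ht, h s t]

theorem Matrix.apply_eq_zero_of_dotProduct_mulVec_eq_zero [CommSemiring R] [Preorder R]
    {M : Matrix ι ι R} {I : Set ι} (hzero : ∀ s t, ¬(s ∈ I ∧ t ∈ I) → M s t = 0)
    (hpos : ∀ x : ι → R, x ≠ 0 → (∀ s, s ∉ I → x s = 0) → 0 < x ⬝ᵥ (M *ᵥ x))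
    {x : ι → R} (hx : x ⬝ᵥ M *ᵥ x = 0) {s : ι} (hs : s ∈ I) : x s = 0 := by
  by_contra hxs
  have hne : I.indicator x ≠ 0 := fun h => hxs (by simpa [hs] using congrFun h s)
  have hlt := hpos _ hne fun t ht => Set.indicator_of_notMem ht x
  rw [indicator_dotProduct_mulVec_indicator hzero, hx] at hlt
  exact lt_irrefl 0 hlt

theorem Matrix.PosSemidef.dotProduct_mulVec_eq_zero_of_sum {α : Type*} [CommRing R]
    [PartialOrder R] [StarRing R] [StarOrderedRing R] [TrivialStar R] {𝓙 : Finset α}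
    {M : α → Matrix ι ι R} (hpsd : ∀ I ∈ 𝓙, (M I).PosSemidef) {x : ι → R}
    (hx : x ⬝ᵥ (∑ I ∈ 𝓙, M I) *ᵥ x = 0) : ∀ I ∈ 𝓙, x ⬝ᵥ M I *ᵥ x = 0 := by
  have hnonneg : ∀ I ∈ 𝓙, 0 ≤ x ⬝ᵥ M I *ᵥ x := fun I hI => by
    simpa using (hpsd I hI).dotProduct_mulVec_nonneg x
  rw [sum_mulVec, dotProduct_sum] at hx
  exact (Finset.sum_eq_zero_iff_of_nonneg hnonneg).mp hx

end Support

theorem stmt8_general (k : ℕ)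
    (𝓙 : Finset (Finset (Fin k)))
    (M : Finset (Fin k) → Matrix (Fin k) (Fin k) ℝ)
    (hpsd : ∀ I ∈ 𝓙, (M I).PosSemidef)
    (hzero : ∀ I ∈ 𝓙, ∀ s t, ¬(s ∈ I ∧ t ∈ I) → M I s t = 0)
    (hpos : ∀ I ∈ 𝓙, ∀ x : Fin k → ℝ, x ≠ 0 → (∀ s, s ∉ I → x s = 0) →
      0 < x ⬝ᵥ (M I *ᵥ x)) :
    LinearMap.range (∑ I ∈ 𝓙, M I).mulVecLin =
      Submodule.span ℝ
        ((fun i => (Pi.single i 1 : Fin k → ℝ)) '' ((𝓙.sup id : Finset (Fin k)) : Set (Fin k))) := by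
  have hmem : ∀ I ∈ 𝓙, ∀ i ∈ I, i ∈ 𝓙.sup id := fun I hI i hi => Finset.mem_sup.mpr ⟨I, hI, hi⟩
  refine LinearMap.range_eq_of_le_of_disjoint_ker
    (range_mulVecLin_le_span_single fun i hi j => ?_) ?_
  · rw [Matrix.sum_apply]
    exact Finset.sum_eq_zero fun I hI => hzero I hI i j fun h => hi (hmem I hI i h.1)
  · rw [Submodule.disjoint_def]
    intro x hxS hx
    have hq := PosSemidef.dotProduct_mulVec_eq_zero_of_sum hpsd
      (by rw [← mulVecLin_apply, LinearMap.mem_ker.mp hx, dotProduct_zero])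
    funext i
    by_cases hi : i ∈ 𝓙.sup id
    · obtain ⟨I, hI, hiI⟩ := Finset.mem_sup.mp hi
      exact apply_eq_zero_of_dotProduct_mulVec_eq_zero (hzero I hI) (hpos I hI) (hq I hI) hiI
    · exact Pi.mem_span_single_one_image_iff.mp hxS i hi

theorem stmt8 (k : ℕ) (hk : 1 ≤ k)
    (𝓙 : Finset (Finset (Fin k)))
    (M : Finset (Fin k) → Matrix (Fin k) (Fin k) ℝ)
    (hpsd : ∀ I ∈ 𝓙, (M I).PosSemidef)
    (hzero : ∀ I ∈ 𝓙, ∀ s t, ¬(s ∈ I ∧ t ∈ I) → M I s t = 0)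
    (hpos : ∀ I ∈ 𝓙, ∀ x : Fin k → ℝ, x ≠ 0 → (∀ s, s ∉ I → x s = 0) →
      0 < x ⬝ᵥ (M I *ᵥ x)) :
    LinearMap.range (∑ I ∈ 𝓙, M I).mulVecLin =
      Submodule.span ℝ
        ((fun i => (Pi.single i 1 : Fin k → ℝ)) '' ((𝓙.sup id : Finset (Fin k)) : Set (Fin k))) :=
  stmt8_general k 𝓙 M hpsd hzero hpos
end

section
/- Let M and Ξ be symmetric positive semidefinite ℓ×ℓ real matrices, let J ⊆ {1,…,ℓ} be such that the range of M equals the span of {e_j : j ∈ J}, and suppose that ‖Ξ‖_op ≤ λ_min(M_{(J)})/2 and that M + Ξ is invertible. Then for every x ∈ ℝ^ℓ in the range of M, one has |x^⊤ (M+Ξ)^{-1} x − x_{(J)}^⊤ M_{(J)}^{-1} x_{(J)}| ≤ 2 ‖M_{(J)}^{-1}‖_op² · ‖Ξ‖_op · ‖x‖₂². -/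
open Matrix

/-- Minimum eigenvalue of a square real matrix, as the infimum of its real spectrum. -/
noncomputable def minEig {n : Type*} [Fintype n] [DecidableEq n] (A : Matrix n n ℝ) : ℝ :=
  sInf (spectrum ℝ A)

/-- The principal submatrix of `M` indexed by `J`. -/
def subJ {l : ℕ} (M : Matrix (Fin l) (Fin l) ℝ) (J : Finset (Fin l)) :
    Matrix {j // j ∈ J} {j // j ∈ J} ℝ :=
  M.submatrix Subtype.val Subtype.val

/-- The restriction of a vector `x` to the coordinates in `J`. -/
def restr {l : ℕ} (x : Fin l → ℝ) (J : Finset (Fin l)) : {j // j ∈ J} → ℝ :=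
  fun j => x j.val

/-!
Put `y = (M + Ξ)⁻¹ x` and `A = M_(J)`. The range condition and the symmetry of `M` make `M` vanish
off the `J × J` block, so `x = M y + Ξ y` forces `Ξ y` to vanish off `J` as well, and restricting to
`J` gives `x_J = A y_J + (Ξ y)_J`. Hence `x ⬝ y - x_J ⬝ A⁻¹ x_J = - x_J ⬝ A⁻¹ (Ξ y)_J`.
Since `Ξ ≥ 0`, `‖Ξ y‖² ≤ ‖Ξ‖ (y ⬝ Ξ y) = ‖Ξ‖ (y_J ⬝ (Ξ y)_J)`, so `‖Ξ y‖ ≤ ‖Ξ‖ ‖y_J‖`. Finally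
`λ_min(A) ‖A⁻¹‖ ≤ 1` gives `‖A⁻¹‖ ‖Ξ‖ ≤ 1/2`, and then `y_J = A⁻¹ x_J - A⁻¹ (Ξ y)_J` yields
`‖y_J‖ ≤ 2 ‖A⁻¹‖ ‖x_J‖`.
-/

open scoped Matrix.Norms.L2Operator MatrixOrder

-- `n → ℝ` carries the sup norm; this is the Euclidean norm.
noncomputable def euclNorm {n : Type*} [Fintype n] (v : n → ℝ) : ℝ :=
  ‖WithLp.toLp 2 v‖

section EuclideanNorm

variable {n : Type*} [Fintype n]

lemma euclNorm_nonneg (v : n → ℝ) : 0 ≤ euclNorm v := norm_nonneg _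

lemma dotProduct_self_eq_euclNorm_sq (v : n → ℝ) : v ⬝ᵥ v = euclNorm v ^ 2 := by
  rw [euclNorm, ← real_inner_self_eq_norm_sq, EuclideanSpace.inner_eq_star_dotProduct]
  simp

lemma abs_dotProduct_le_euclNorm_mul (u v : n → ℝ) : |u ⬝ᵥ v| ≤ euclNorm u * euclNorm v := by
  have := abs_real_inner_le_norm (WithLp.toLp 2 u) (WithLp.toLp 2 v)
  rwa [EuclideanSpace.inner_eq_star_dotProduct, star_trivial, dotProduct_comm] at this

lemma dotProduct_le_euclNorm_mul (u v : n → ℝ) : u ⬝ᵥ v ≤ euclNorm u * euclNorm v :=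
  (le_abs_self _).trans (abs_dotProduct_le_euclNorm_mul u v)

lemma euclNorm_sub_le (u v : n → ℝ) : euclNorm (u - v) ≤ euclNorm u + euclNorm v := by
  simpa [euclNorm, WithLp.toLp_sub] using norm_sub_le (WithLp.toLp 2 u) (WithLp.toLp 2 v)

variable [DecidableEq n]

lemma euclNorm_mulVec_le (A : Matrix n n ℝ) (v : n → ℝ) :
    euclNorm (A *ᵥ v) ≤ opNorm A * euclNorm v :=
  A.l2_opNorm_mulVec (WithLp.toLp 2 v)

lemma opNorm_le_of_euclNorm_mulVec_le {A : Matrix n n ℝ} {c : ℝ} (hc : 0 ≤ c)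
    (h : ∀ v, euclNorm (A *ᵥ v) ≤ c * euclNorm v) : opNorm A ≤ c :=
  ContinuousLinearMap.opNorm_le_bound _ hc fun w => h w.ofLp

lemma opNorm_nonneg (A : Matrix n n ℝ) : 0 ≤ opNorm A := norm_nonneg _

end EuclideanNorm

section Spectral

variable {n : Type*} [Fintype n] [DecidableEq n]

lemma Matrix.IsHermitian.minEig_mul_dotProduct_self_le {A : Matrix n n ℝ} (hA : A.IsHermitian)
    (v : n → ℝ) : minEig A * (v ⬝ᵥ v) ≤ v ⬝ᵥ (A *ᵥ v) := by
  have hle : algebraMap ℝ _ (minEig A) ≤ A :=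
    (algebraMap_le_iff_le_spectrum hA.isSelfAdjoint).mpr fun _ hμ =>
      csInf_le (spectrum.isCompact A).bddBelow hμ
  have := (le_iff.mp hle).dotProduct_mulVec_nonneg v
  rwa [star_trivial, Algebra.algebraMap_eq_smul_one, sub_mulVec, smul_mulVec, one_mulVec,
    dotProduct_sub, dotProduct_smul, smul_eq_mul, sub_nonneg] at this

lemma Matrix.IsHermitian.minEig_mul_euclNorm_le {A : Matrix n n ℝ} (hA : A.IsHermitian)
    (v : n → ℝ) : minEig A * euclNorm v ≤ euclNorm (A *ᵥ v) := by
  have h := hA.minEig_mul_dotProduct_self_le v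
  rw [dotProduct_self_eq_euclNorm_sq] at h
  have h' := h.trans (dotProduct_le_euclNorm_mul v (A *ᵥ v))
  rcases (euclNorm_nonneg v).eq_or_lt with h0 | hpos
  · rw [← h0, mul_zero]
    exact euclNorm_nonneg _
  · exact le_of_mul_le_mul_left (by linarith) hpos

lemma Matrix.IsHermitian.minEig_mul_opNorm_inv_le_one {A : Matrix n n ℝ} (hA : A.IsHermitian)
    (hdet : IsUnit A.det) : minEig A * opNorm A⁻¹ ≤ 1 := by
  rcases le_or_gt (minEig A) 0 with hμ | hμ
  · nlinarith [opNorm_nonneg A⁻¹]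
  rw [← le_div_iff₀' hμ, one_div]
  refine opNorm_le_of_euclNorm_mulVec_le (inv_nonneg.mpr hμ.le) fun v => ?_
  rw [inv_mul_eq_div, le_div_iff₀' hμ]
  simpa [mulVec_mulVec, mul_nonsing_inv _ hdet] using hA.minEig_mul_euclNorm_le (A⁻¹ *ᵥ v)

end Spectral

lemma Matrix.PosSemidef.euclNorm_mulVec_sq_le {n : Type*} [Fintype n] [DecidableEq n]
    {A : Matrix n n ℝ} (hA : A.PosSemidef) (v : n → ℝ) :
    euclNorm (A *ᵥ v) ^ 2 ≤ opNorm A * (v ⬝ᵥ (A *ᵥ v)) := by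
  set S := CFC.sqrt A
  have hS : S.IsHermitian := (CFC.sqrt_nonneg A).posSemidef.isHermitian
  have hSS : S * S = A := CFC.sqrt_mul_sqrt_self A hA.nonneg
  have hnorm : opNorm A = opNorm S ^ 2 := by
    have := l2_opNorm_conjTranspose_mul_self S
    rw [hS.eq] at this
    rw [sq, ← hSS]
    exact this
  have hquad : v ⬝ᵥ (A *ᵥ v) = euclNorm (S *ᵥ v) ^ 2 := by
    rw [← dotProduct_self_eq_euclNorm_sq, ← hSS, ← mulVec_mulVec, dotProduct_mulVec,
      ← mulVec_transpose, ← conjTranspose_eq_transpose_of_trivial, hS.eq]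
  calc euclNorm (A *ᵥ v) ^ 2 = euclNorm (S *ᵥ (S *ᵥ v)) ^ 2 := by rw [mulVec_mulVec, hSS]
    _ ≤ (opNorm S * euclNorm (S *ᵥ v)) ^ 2 :=
      pow_le_pow_left₀ (euclNorm_nonneg _) (euclNorm_mulVec_le S _) 2
    _ = opNorm A * (v ⬝ᵥ (A *ᵥ v)) := by rw [hnorm, hquad]; ring

lemma abs_dotProduct_sub_dotProduct_inv_mulVec_le {n : Type*} [Fintype n] [DecidableEq n]
    {A : Matrix n n ℝ} (hA : IsUnit A.det) {u w e : n → ℝ} {ξ : ℝ} (hξ : 0 ≤ ξ)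
    (hu : u = A *ᵥ w + e) (he : euclNorm e ≤ ξ * euclNorm w) (hsmall : opNorm A⁻¹ * ξ ≤ 1 / 2) :
    |u ⬝ᵥ w - u ⬝ᵥ (A⁻¹ *ᵥ u)| ≤ 2 * opNorm A⁻¹ ^ 2 * ξ * euclNorm u ^ 2 := by
  set K := opNorm A⁻¹
  have hK : 0 ≤ K := opNorm_nonneg _
  have hw : w = A⁻¹ *ᵥ u - A⁻¹ *ᵥ e := by
    rw [hu, mulVec_add, mulVec_mulVec, nonsing_inv_mul _ hA, one_mulVec, add_sub_cancel_right]
  have hAe : euclNorm (A⁻¹ *ᵥ e) ≤ K * (ξ * euclNorm w) :=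
    (euclNorm_mulVec_le _ _).trans (mul_le_mul_of_nonneg_left he hK)
  have hw_le : euclNorm w ≤ 2 * K * euclNorm u := by
    have : euclNorm w ≤ K * euclNorm u + K * (ξ * euclNorm w) := by
      calc euclNorm w ≤ euclNorm (A⁻¹ *ᵥ u) + euclNorm (A⁻¹ *ᵥ e) := by
            rw [hw]; exact euclNorm_sub_le _ _
        _ ≤ K * euclNorm u + K * (ξ * euclNorm w) := add_le_add (euclNorm_mulVec_le _ _) hAe
    nlinarith [euclNorm_nonneg w]
  calc |u ⬝ᵥ w - u ⬝ᵥ (A⁻¹ *ᵥ u)| = |u ⬝ᵥ (A⁻¹ *ᵥ e)| := by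
        rw [hw, dotProduct_sub, sub_sub_cancel_left, abs_neg]
    _ ≤ euclNorm u * (K * (ξ * euclNorm w)) :=
        (abs_dotProduct_le_euclNorm_mul _ _).trans
          (mul_le_mul_of_nonneg_left hAe (euclNorm_nonneg _))
    _ ≤ euclNorm u * (K * (ξ * (2 * K * euclNorm u))) := by
        have := euclNorm_nonneg u
        gcongr
    _ = 2 * K ^ 2 * ξ * euclNorm u ^ 2 := by ring

section Coordinates

variable {l : ℕ} {J : Finset (Fin l)}

lemma mem_span_single_iff (x : Fin l → ℝ) :
    x ∈ Submodule.span ℝ ((fun i => (Pi.single i 1 : Fin l → ℝ)) '' (J : Set (Fin l))) ↔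
      ∀ i ∉ J, x i = 0 := by
  have hbasis : (fun i => (Pi.single i 1 : Fin l → ℝ)) = Pi.basisFun ℝ (Fin l) := by
    ext i; simp
  rw [hbasis, Module.Basis.mem_span_image]
  simp [Set.subset_def, not_imp_comm]

lemma dotProduct_eq_restr_dotProduct_restr {a : Fin l → ℝ} (ha : ∀ i ∉ J, a i = 0)
    (b : Fin l → ℝ) : a ⬝ᵥ b = restr a J ⬝ᵥ restr b J := by
  rw [dotProduct, dotProduct, ← Finset.sum_subset (Finset.subset_univ J)
    (fun i _ hi => by rw [ha i hi, zero_mul])]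
  exact (Finset.sum_coe_sort J fun i => a i * b i).symm

lemma euclNorm_restr_le (a : Fin l → ℝ) : euclNorm (restr a J) ≤ euclNorm a := by
  refine (pow_le_pow_iff_left₀ (euclNorm_nonneg _) (euclNorm_nonneg _) two_ne_zero).mp ?_
  rw [← dotProduct_self_eq_euclNorm_sq, ← dotProduct_self_eq_euclNorm_sq, dotProduct, dotProduct]
  simp only [restr]
  rw [Finset.sum_coe_sort J fun i => a i * a i]
  exact Finset.sum_le_sum_of_subset_of_nonneg (Finset.subset_univ J)
    fun i _ _ => mul_self_nonneg (a i)

lemma Matrix.PosSemidef.euclNorm_mulVec_le_of_forall_notMem {A : Matrix (Fin l) (Fin l) ℝ}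
    (hA : A.PosSemidef) {y : Fin l → ℝ} (hy : ∀ i ∉ J, (A *ᵥ y) i = 0) :
    euclNorm (A *ᵥ y) ≤ opNorm A * euclNorm (restr y J) := by
  have h : euclNorm (A *ᵥ y) ^ 2 ≤ euclNorm (A *ᵥ y) * (opNorm A * euclNorm (restr y J)) :=
    calc euclNorm (A *ᵥ y) ^ 2 ≤ opNorm A * ((A *ᵥ y) ⬝ᵥ y) := by
          rw [dotProduct_comm]; exact hA.euclNorm_mulVec_sq_le y
      _ = opNorm A * (restr (A *ᵥ y) J ⬝ᵥ restr y J) := by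
          rw [dotProduct_eq_restr_dotProduct_restr hy]
      _ ≤ opNorm A * (euclNorm (A *ᵥ y) * euclNorm (restr y J)) :=
          mul_le_mul_of_nonneg_left ((dotProduct_le_euclNorm_mul _ _).trans
            (mul_le_mul_of_nonneg_right (euclNorm_restr_le _) (euclNorm_nonneg _)))
            (opNorm_nonneg A)
      _ = euclNorm (A *ᵥ y) * (opNorm A * euclNorm (restr y J)) := by ring
  rcases (euclNorm_nonneg (A *ᵥ y)).eq_or_lt with h0 | hpos
  · rw [← h0]
    exact mul_nonneg (opNorm_nonneg A) (euclNorm_nonneg _)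
  · exact le_of_mul_le_mul_left (by rwa [sq] at h) hpos

variable {M : Matrix (Fin l) (Fin l) ℝ}

lemma mulVec_apply_eq_zero_of_range_eq
    (hrange : LinearMap.range M.mulVecLin =
      Submodule.span ℝ ((fun i => (Pi.single i 1 : Fin l → ℝ)) '' (J : Set (Fin l))))
    (z : Fin l → ℝ) : ∀ i ∉ J, (M *ᵥ z) i = 0 :=
  (mem_span_single_iff _).mp (hrange ▸ LinearMap.mem_range_self M.mulVecLin z)

lemma restr_mulVec_of_mulVec_apply_eq_zero (hM : M.IsHermitian)
    (hM0 : ∀ z, ∀ i ∉ J, (M *ᵥ z) i = 0) (z : Fin l → ℝ) :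
    restr (M *ᵥ z) J = subJ M J *ᵥ restr z J := by
  funext j
  have hrow : ∀ k ∉ J, M j k = 0 := fun k hk => by
    simpa [mulVec_single_one, ← hM.apply k] using hM0 (Pi.single (j : Fin l) 1) k hk
  exact dotProduct_eq_restr_dotProduct_restr hrow z

lemma isUnit_det_subJ_of_range_eq (hM : M.IsHermitian)
    (hrange : LinearMap.range M.mulVecLin =
      Submodule.span ℝ ((fun i => (Pi.single i 1 : Fin l → ℝ)) '' (J : Set (Fin l)))) :
    IsUnit (subJ M J).det := by
  refine (isUnit_iff_isUnit_det _).mp (mulVec_surjective_iff_isUnit.mp fun v => ?_)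
  have hv : (fun i => if h : i ∈ J then v ⟨i, h⟩ else 0) ∈ LinearMap.range M.mulVecLin := by
    rw [hrange, mem_span_single_iff]
    intro i hi
    simp [hi]
  obtain ⟨w, hw⟩ := hv
  refine ⟨restr w J, ?_⟩
  rw [← restr_mulVec_of_mulVec_apply_eq_zero hM (mulVec_apply_eq_zero_of_range_eq hrange),
    ← mulVecLin_apply, hw]
  funext j
  simp [restr]

end Coordinates

theorem stmt10_general (l : ℕ)
    (M Xi : Matrix (Fin l) (Fin l) ℝ)
    (hM : M.PosSemidef) (hXi : Xi.PosSemidef)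
    (J : Finset (Fin l))
    (hrange : LinearMap.range M.mulVecLin =
      Submodule.span ℝ ((fun i => (Pi.single i 1 : Fin l → ℝ)) '' (J : Set (Fin l))))
    (hnorm : opNorm Xi ≤ minEig (subJ M J) / 2)
    (hinv : IsUnit (M + Xi))
    (x : Fin l → ℝ) (hx : x ∈ LinearMap.range M.mulVecLin) :
    |x ⬝ᵥ ((M + Xi)⁻¹ *ᵥ x) - restr x J ⬝ᵥ ((subJ M J)⁻¹ *ᵥ restr x J)| ≤
      2 * (opNorm ((subJ M J)⁻¹)) ^ 2 * opNorm Xi * ∑ s, (x s) ^ 2 := by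
  set A := subJ M J
  set y := (M + Xi)⁻¹ *ᵥ x
  have hM0 := mulVec_apply_eq_zero_of_range_eq hrange
  have hA : IsUnit A.det := isUnit_det_subJ_of_range_eq hM.isHermitian hrange
  have hx0 : ∀ i ∉ J, x i = 0 := (mem_span_single_iff x).mp (hrange ▸ hx)
  have hxy : x = M *ᵥ y + Xi *ᵥ y := by
    rw [← add_mulVec, mulVec_mulVec, mul_nonsing_inv _ ((isUnit_iff_isUnit_det _).mp hinv),
      one_mulVec]
  have hXiy0 : ∀ i ∉ J, (Xi *ᵥ y) i = 0 := fun i hi => by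
    simpa [hM0 y i hi, hx0 i hi] using (congrFun hxy i).symm
  have hsmall : opNorm A⁻¹ * opNorm Xi ≤ 1 / 2 := by
    have hAherm : A.IsHermitian := hM.isHermitian.submatrix Subtype.val
    have := hAherm.minEig_mul_opNorm_inv_le_one hA
    nlinarith [mul_le_mul_of_nonneg_left hnorm (opNorm_nonneg A⁻¹)]
  have hsum : ∑ s, x s ^ 2 = euclNorm (restr x J) ^ 2 := by
    rw [← dotProduct_self_eq_euclNorm_sq, ← dotProduct_eq_restr_dotProduct_restr hx0]
    simp only [dotProduct, sq]
  rw [dotProduct_eq_restr_dotProduct_restr hx0, hsum]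
  refine abs_dotProduct_sub_dotProduct_inv_mulVec_le hA (opNorm_nonneg Xi) ?_
    ((euclNorm_restr_le _).trans (hXi.euclNorm_mulVec_le_of_forall_notMem hXiy0)) hsmall
  rw [← restr_mulVec_of_mulVec_apply_eq_zero hM.isHermitian hM0, hxy]
  rfl

theorem stmt10 (l : ℕ) (hl : 1 ≤ l)
    (M Xi : Matrix (Fin l) (Fin l) ℝ)
    (hM : M.PosSemidef) (hXi : Xi.PosSemidef)
    (J : Finset (Fin l))
    (hrange : LinearMap.range M.mulVecLin =
      Submodule.span ℝ ((fun i => (Pi.single i 1 : Fin l → ℝ)) '' (J : Set (Fin l))))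
    (hnorm : opNorm Xi ≤ minEig (subJ M J) / 2)
    (hinv : IsUnit (M + Xi))
    (x : Fin l → ℝ) (hx : x ∈ LinearMap.range M.mulVecLin) :
    |x ⬝ᵥ ((M + Xi)⁻¹ *ᵥ x) - restr x J ⬝ᵥ ((subJ M J)⁻¹ *ᵥ restr x J)| ≤
      2 * (opNorm ((subJ M J)⁻¹)) ^ 2 * opNorm Xi * ∑ s, (x s) ^ 2 :=
  stmt10_general l M Xi hM hXi J hrange hnorm hinv x hx
end

section
/- Let M and Ξ be symmetric positive semidefinite ℓ×ℓ real matrices, let J ⊆ {1,…,ℓ} be such that the range of M equals the span of {e_j : j ∈ J}, and suppose that ‖Ξ‖_op ≤ λ_min(M_{(J)})/2, that Ξ ≠ 0, and that M + Ξ is invertible. Then for every x ∈ ℝ^ℓ not in the range of M, one has x^⊤ (M+Ξ)^{-1} x ≥ ‖x_{(J^c)}‖₂² / (2‖Ξ‖_op), where J^c = {1,…,ℓ} \ J. -/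
open Matrix

/-! With `y = (M + Ξ)⁻¹ x`, the range hypothesis makes `M y` vanish off `J`, so `x` agrees with
`Ξ y` there. Hence `∑_{s ∉ J} x_s² ≤ ‖Ξ y‖² ≤ ‖Ξ‖ yᵀΞy ≤ ‖Ξ‖ xᵀy`, the middle step being
Cauchy–Schwarz for the semi-inner product defined by `Ξ`. -/

theorem apply_eq_zero_of_mem_span_single {ι R : Type*} [DecidableEq ι] [Semiring R] {J : Set ι}
    {v : ι → R} (hv : v ∈ Submodule.span R ((fun i => Pi.single i 1) '' J)) {s : ι}
    (hs : s ∉ J) : v s = 0 := by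
  induction hv using Submodule.span_induction with
  | mem w hw =>
    obtain ⟨i, hi, rfl⟩ := hw
    exact Pi.single_eq_of_ne (by rintro rfl; exact hs hi) 1
  | zero => rfl
  | add u w _ _ hu hw => simp [hu, hw]
  | smul c w _ hw => simp [hw]

namespace Matrix

variable {n : Type*} [Fintype n] [DecidableEq n]

theorem dotProduct_mulVec_le_opNorm_mul (A : Matrix n n ℝ) (w : n → ℝ) :
    w ⬝ᵥ (A *ᵥ w) ≤ opNorm A * (w ⬝ᵥ w) := by
  set T := LinearMap.toContinuousLinearMap (Matrix.toEuclideanLin A)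
  have hTw : T (WithLp.toLp 2 w) = WithLp.toLp 2 (A *ᵥ w) := rfl
  have hww : w ⬝ᵥ w = ‖WithLp.toLp 2 w‖ ^ 2 := by
    rw [← real_inner_self_eq_norm_sq, EuclideanSpace.inner_toLp_toLp, star_trivial]
  calc w ⬝ᵥ (A *ᵥ w) = inner ℝ (WithLp.toLp 2 w) (T (WithLp.toLp 2 w)) := by
        rw [hTw, EuclideanSpace.inner_toLp_toLp, star_trivial, dotProduct_comm]
    _ ≤ ‖WithLp.toLp 2 w‖ * ‖T (WithLp.toLp 2 w)‖ := real_inner_le_norm _ _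
    _ ≤ ‖WithLp.toLp 2 w‖ * (‖T‖ * ‖WithLp.toLp 2 w‖) := by gcongr; exact T.le_opNorm _
    _ = opNorm A * (w ⬝ᵥ w) := by rw [hww, opNorm]; ring

theorem PosSemidef.mulVec_dotProduct_mulVec_le {A : Matrix n n ℝ} (hA : A.PosSemidef)
    (v : n → ℝ) : (A *ᵥ v) ⬝ᵥ (A *ᵥ v) ≤ opNorm A * (v ⬝ᵥ (A *ᵥ v)) := by
  have hsymm : ∀ u w : n → ℝ, u ⬝ᵥ (A *ᵥ w) = (A *ᵥ u) ⬝ᵥ w := fun u w => by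
    rw [dotProduct_mulVec, ← mulVec_transpose, ← conjTranspose_eq_transpose_of_trivial,
      hA.isHermitian.eq]
  -- Cauchy–Schwarz for the semi-inner product `(u, w) ↦ u ⬝ᵥ A *ᵥ w`, applied to `v` and `A *ᵥ v`.
  have hcs := (Matrix.toBilin' A).apply_mul_apply_le_of_forall_zero_le
    (fun u => by simpa [toBilin'_apply'] using hA.dotProduct_mulVec_nonneg u) v (A *ᵥ v)
  simp only [toBilin'_apply'] at hcs
  rw [hsymm v (A *ᵥ v)] at hcs
  have hp : 0 ≤ v ⬝ᵥ (A *ᵥ v) := by simpa using hA.dotProduct_mulVec_nonneg v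
  have hq : 0 ≤ (A *ᵥ v) ⬝ᵥ (A *ᵥ v) := by simpa using dotProduct_self_star_nonneg (A *ᵥ v)
  rcases hq.eq_or_lt with hq | hq
  · rw [← hq]; exact mul_nonneg (norm_nonneg _) hp
  · refine le_of_mul_le_mul_right ?_ hq
    calc _ ≤ v ⬝ᵥ (A *ᵥ v) * ((A *ᵥ v) ⬝ᵥ (A *ᵥ (A *ᵥ v))) := hcs
      _ ≤ v ⬝ᵥ (A *ᵥ v) * (opNorm A * ((A *ᵥ v) ⬝ᵥ (A *ᵥ v))) :=
          mul_le_mul_of_nonneg_left (dotProduct_mulVec_le_opNorm_mul A (A *ᵥ v)) hp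
      _ = _ := by ring

end Matrix

theorem stmt11_general (l : ℕ)
    (M Xi : Matrix (Fin l) (Fin l) ℝ)
    (hM : M.PosSemidef) (hXi : Xi.PosSemidef)
    (J : Finset (Fin l))
    (hrange : LinearMap.range M.mulVecLin =
      Submodule.span ℝ ((fun i => (Pi.single i 1 : Fin l → ℝ)) '' (J : Set (Fin l))))
    (hinv : IsUnit (M + Xi))
    (x : Fin l → ℝ) :
    (∑ s ∈ Jᶜ, (x s) ^ 2) / (2 * opNorm Xi) ≤ x ⬝ᵥ ((M + Xi)⁻¹ *ᵥ x) := by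
  set y := (M + Xi)⁻¹ *ᵥ x
  have hxy : M *ᵥ y + Xi *ᵥ y = x := by
    rw [← add_mulVec, mulVec_mulVec, mul_nonsing_inv _ ((isUnit_iff_isUnit_det _).1 hinv),
      one_mulVec]
  have hMy : 0 ≤ y ⬝ᵥ (M *ᵥ y) := by simpa using hM.dotProduct_mulVec_nonneg y
  have hXiy : 0 ≤ y ⬝ᵥ (Xi *ᵥ y) := by simpa using hXi.dotProduct_mulVec_nonneg y
  have hsplit : x ⬝ᵥ y = y ⬝ᵥ (M *ᵥ y) + y ⬝ᵥ (Xi *ᵥ y) := by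
    rw [← hxy, dotProduct_comm, dotProduct_add]
  have hcompl : ∀ s ∈ Jᶜ, x s = (Xi *ᵥ y) s := fun s hs => by
    have hMy_range : M *ᵥ y ∈ LinearMap.range M.mulVecLin := ⟨y, rfl⟩
    rw [hrange] at hMy_range
    rw [← hxy, Pi.add_apply, apply_eq_zero_of_mem_span_single hMy_range (by simpa using hs),
      zero_add]
  have hε : 0 ≤ opNorm Xi := norm_nonneg _
  have hsum : ∑ s ∈ Jᶜ, x s ^ 2 ≤ opNorm Xi * (x ⬝ᵥ y) := calc
    ∑ s ∈ Jᶜ, x s ^ 2 = ∑ s ∈ Jᶜ, (Xi *ᵥ y) s ^ 2 :=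
        Finset.sum_congr rfl fun s hs => by rw [hcompl s hs]
    _ ≤ (Xi *ᵥ y) ⬝ᵥ (Xi *ᵥ y) := by
      simpa only [dotProduct, sq] using Finset.sum_le_univ_sum_of_nonneg fun s => mul_self_nonneg _
    _ ≤ opNorm Xi * (y ⬝ᵥ (Xi *ᵥ y)) := hXi.mulVec_dotProduct_mulVec_le y
    _ ≤ opNorm Xi * (x ⬝ᵥ y) := by gcongr; linarith
  exact div_le_of_le_mul₀ (by positivity) (by linarith) (by nlinarith)

theorem stmt11 (l : ℕ) (hl : 1 ≤ l)
    (M Xi : Matrix (Fin l) (Fin l) ℝ)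
    (hM : M.PosSemidef) (hXi : Xi.PosSemidef)
    (J : Finset (Fin l))
    (hrange : LinearMap.range M.mulVecLin =
      Submodule.span ℝ ((fun i => (Pi.single i 1 : Fin l → ℝ)) '' (J : Set (Fin l))))
    (hnorm : opNorm Xi ≤ minEig (subJ M J) / 2)
    (hXi0 : Xi ≠ 0) (hinv : IsUnit (M + Xi))
    (x : Fin l → ℝ) (hx : x ∉ LinearMap.range M.mulVecLin) :
    (∑ s ∈ Jᶜ, (x s) ^ 2) / (2 * opNorm Xi) ≤ x ⬝ᵥ ((M + Xi)⁻¹ *ᵥ x) :=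
  stmt11_general l M Xi hM hXi J hrange hinv x
end

section
/- Let (Ω, 𝓕, ℙ) be a probability space, let (Y_j)_{j≥1} be i.i.d. real random variables with E[Y_1] = 0 and E[Y_1²] < ∞, and let ν > 0 be a real number. For each t ∈ ℕ, let n̂_t : Ω → ℕ be a random variable with n̂_t ≥ 1 almost surely, and suppose n̂_t/t → ν in probability as t → ∞. Setting S_m := Σ_{j=1}^m Y_j, the random variables S_{n̂_t}/√(n̂_t) − S_{⌊tν⌋}/√(⌊tν⌋) converge to 0 in probability as t → ∞. -/
/-!
This is Anscombe's argument. Write `S m = ∑_{j<m} Y j`, `k = ⌊tν⌋` and fix a small `δ`. Outside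
an event whose probability tends to `0`, `|n̂_t - k| ≤ δ k`, and then
`|S_{n̂}/√n̂ - S_k/√k| ≤ 2 (|S_{n̂} - S_k| + δ |S_k|) / √k`.
By Kolmogorov's maximal inequality (Doob's inequality for the submartingale `S_m²`), the
fluctuation `max_{|m-k| ≤ δk} |S_m - S_k|` exceeds `ε√k/4` with probability `O(δ/ε²)`, and
`δ |S_k| ≥ ε√k/4` has probability `O(δ²/ε²)`. Letting `δ → 0` gives the claim.
-/

open MeasureTheory ProbabilityTheory Filter Finset
open Real Topology

lemma abs_sqrt_sub_sqrt_mul_sqrt_le {m k : ℝ} (hm : 0 ≤ m) (hk : 0 ≤ k) :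
    |√k - √m| * √k ≤ |m - k| := by
  calc |√k - √m| * √k ≤ |√k - √m| * (√k + √m) := by
        gcongr; exact le_add_of_nonneg_right (sqrt_nonneg m)
    _ = |m - k| := by
        rw [← abs_of_nonneg (by positivity : 0 ≤ √k + √m), ← abs_mul, abs_sub_comm m k]
        congr 1
        nlinarith [sq_sqrt hm, sq_sqrt hk]

lemma abs_div_sqrt_sub_div_sqrt_le {x y m k : ℝ} (hm : 0 < m) (hk : 0 < k) :
    |x / √m - y / √k| ≤ (|x - y| + |m - k| / k * |y|) / √m := by
  have hsm := sqrt_pos.2 hm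
  have hsk := sqrt_pos.2 hk
  have hsplit : x / √m - y / √k = (x - y) / √m + y * (√k - √m) / (√m * √k) := by
    field_simp; ring
  have hroot : |√k - √m| ≤ |m - k| / √k :=
    (le_div_iff₀ hsk).2 (abs_sqrt_sub_sqrt_mul_sqrt_le hm.le hk.le)
  calc |x / √m - y / √k| ≤ |x - y| / √m + |y| * |√k - √m| / (√m * √k) := by
        rw [hsplit]
        refine (abs_add_le _ _).trans_eq ?_
        rw [abs_div, abs_div, abs_mul, abs_of_pos hsm, abs_of_pos (mul_pos hsm hsk)]
    _ ≤ |x - y| / √m + |y| * (|m - k| / √k) / (√m * √k) := by gcongr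
    _ = (|x - y| + |m - k| / k * |y|) / √m := by
        field_simp
        rw [sq_sqrt hk.le]

lemma abs_div_sqrt_sub_div_sqrt_lt {x y m k δ ε : ℝ} (hk : 0 < k) (hδ : δ ≤ 1 / 2)
    (hε : 0 < ε) (hmk : |m - k| ≤ δ * k) (hxy : |x - y| < ε * √k / 4)
    (hy : δ * |y| < ε * √k / 4) : |x / √m - y / √k| < ε := by
  have hm : k ≤ 2 * m := by nlinarith [abs_le.1 hmk]
  have hmpos : 0 < m := by linarith
  have hsqrt : √k ≤ 2 * √m := by
    rw [sqrt_le_iff, mul_pow, sq_sqrt hmpos.le]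
    exact ⟨by positivity, by linarith⟩
  calc |x / √m - y / √k| ≤ (|x - y| + |m - k| / k * |y|) / √m :=
        abs_div_sqrt_sub_div_sqrt_le hmpos hk
    _ < (ε * √k / 4 + ε * √k / 4) / √m := by
        gcongr
        exact (mul_le_mul_of_nonneg_right ((div_le_iff₀ hk).2 hmk) (abs_nonneg _)).trans_lt hy
    _ ≤ ε := by
        rw [div_le_iff₀ (sqrt_pos.2 hmpos)]
        nlinarith [mul_le_mul_of_nonneg_left hsqrt hε.le]

lemma le_abs_div_sub_of_lt_abs_sub_floor {n t ν δ : ℝ} (ht : 0 < t) (hδ : 0 < δ)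
    (htν : 2 * (1 + δ) / δ ≤ t * ν) (hfar : δ * ⌊t * ν⌋₊ < |n - ⌊t * ν⌋₊|) :
    δ * ν / 2 ≤ |n / t - ν| := by
  by_contra! hclose
  have hlarge : 2 * (1 + δ) ≤ δ * (t * ν) := by rwa [div_le_iff₀' hδ] at htν
  have hfloor : δ * (t * ν) < δ * (⌊t * ν⌋₊ + 1) :=
    mul_lt_mul_of_pos_left (Nat.lt_floor_add_one _) hδ
  have hfloor' : (⌊t * ν⌋₊ : ℝ) ≤ t * ν := Nat.floor_le (by nlinarith)
  have hn : |n - t * ν| < δ * (t * ν) / 2 := by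
    rw [show n - t * ν = t * (n / t - ν) by field_simp, abs_mul, abs_of_pos ht]
    calc t * |n / t - ν| < t * (δ * ν / 2) := mul_lt_mul_of_pos_left hclose ht
      _ = δ * (t * ν) / 2 := by ring
  rw [abs_lt] at hn
  rw [lt_abs] at hfar
  rcases hfar with hfar | hfar <;> nlinarith

section IndependentSums

variable {Ω : Type*} [MeasurableSpace Ω] {P : Measure Ω} [IsProbabilityMeasure P]
  {X : ℕ → Ω → ℝ}

lemma integral_sq_sum_of_iIndepFun (hX : iIndepFun X P) (hmean : ∀ j, ∫ ω, X j ω ∂P = 0)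
    (hL2 : ∀ j, MemLp (X j) 2 P) (s : Finset ℕ) :
    ∫ ω, (∑ j ∈ s, X j ω) ^ 2 ∂P = ∑ j ∈ s, ∫ ω, X j ω ^ 2 ∂P := by
  have hsum_mean : ∫ ω, (∑ j ∈ s, X j) ω ∂P = 0 := by
    simp only [Finset.sum_apply]
    rw [integral_finsetSum _ fun j _ => (hL2 j).integrable one_le_two]
    simp [hmean]
  have hvar := IndepFun.variance_sum (s := s) (fun j _ => hL2 j) fun i _ j _ hij => hX.indepFun hij
  rw [variance_of_integral_eq_zero (memLp_finsetSum' s fun j _ => hL2 j).aemeasurable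
    hsum_mean] at hvar
  simpa [Finset.sum_apply,
    variance_of_integral_eq_zero (hL2 _).aemeasurable (hmean _)] using hvar

lemma submartingale_sq_partialSum (hXm : ∀ j, StronglyMeasurable (X j)) (hX : iIndepFun X P)
    (hmean : ∀ j, ∫ ω, X j ω ∂P = 0) (hL2 : ∀ j, MemLp (X j) 2 P) :
    Submartingale (fun n ω => (∑ j ∈ range (n + 1), X j ω) ^ 2) (Filtration.natural X hXm) P := by
  set ℱ := Filtration.natural X hXm
  set M : ℕ → Ω → ℝ := fun n ω => ∑ j ∈ range (n + 1), X j ω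
  have hML2 : ∀ n, MemLp (M n) 2 P := fun n => by
    simpa [M, ← Finset.sum_apply] using memLp_finsetSum' (range (n + 1)) fun j _ => hL2 j
  have hMadapted : StronglyAdapted ℱ M := fun n =>
    Finset.stronglyMeasurable_fun_sum _ fun j hj =>
      (Filtration.stronglyAdapted_natural hXm j).mono
        (ℱ.mono (Nat.lt_succ_iff.1 (Finset.mem_range.1 hj)))
  refine submartingale_of_condExp_sub_nonneg_nat
    (fun n => (hMadapted n).pow 2)
    (fun n => (hML2 n).integrable_sq) fun n => ?_
  have hincr : (fun ω => M (n + 1) ω ^ 2) - (fun ω => M n ω ^ 2)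
      = (fun ω => 2 * M n ω * X (n + 1) ω) + fun ω => X (n + 1) ω ^ 2 := by
    funext ω
    simp only [Pi.sub_apply, Pi.add_apply, M, Finset.sum_range_succ _ (n + 1)]
    ring
  have hcross : Integrable (fun ω => 2 * M n ω * X (n + 1) ω) P :=
    (((hL2 (n + 1)).integrable_mul (hML2 n)).const_mul 2).congr
      (ae_of_all _ fun ω => by simp only [Pi.mul_apply]; ring)
  have hpull : P[fun ω => 2 * M n ω * X (n + 1) ω | ℱ n]
      =ᵐ[P] (fun ω => 2 * M n ω) * P[X (n + 1) | ℱ n] :=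
    condExp_mul_of_stronglyMeasurable_left (stronglyMeasurable_const.mul (hMadapted n)) hcross
      ((hL2 (n + 1)).integrable one_le_two)
  have hcentred : P[X (n + 1) | ℱ n] =ᵐ[P] fun _ => (0 : ℝ) := by
    simpa [hmean (n + 1)] using hX.condExp_natural_ae_eq_of_lt hXm (Nat.lt_succ_self n)
  have hsq_nonneg : 0 ≤ᵐ[P] P[fun ω => X (n + 1) ω ^ 2 | ℱ n] :=
    condExp_nonneg (Eventually.of_forall fun ω => sq_nonneg _)
  rw [hincr]
  filter_upwards [condExp_add hcross (hL2 (n + 1)).integrable_sq (ℱ n), hpull, hcentred,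
    hsq_nonneg] with ω hadd hpull hcentred hsq_nonneg
  simpa [hadd, hpull, hcentred] using hsq_nonneg

-- Kolmogorov's maximal inequality
theorem measure_exists_le_abs_partialSum_ge_le (hXm : ∀ j, Measurable (X j))
    (hX : iIndepFun X P) (hmean : ∀ j, ∫ ω, X j ω ∂P = 0) (hL2 : ∀ j, MemLp (X j) 2 P)
    (n : ℕ) {c : ℝ} (hc : 0 < c) :
    P {ω | ∃ m ≤ n, c ≤ |∑ j ∈ range m, X j ω|}
      ≤ ENNReal.ofReal ((∑ j ∈ range n, ∫ ω, X j ω ^ 2 ∂P) / c ^ 2) := by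
  rcases n with _ | n
  · simp [hc.not_ge]
  set Q : ℕ → Ω → ℝ := fun m ω => (∑ j ∈ range (m + 1), X j ω) ^ 2
  have hsub : Submartingale Q _ P :=
    submartingale_sq_partialSum (fun j => (hXm j).stronglyMeasurable) hX hmean hL2
  set A := {ω | ((c ^ 2).toNNReal : ℝ) ≤ (range (n + 1)).sup' nonempty_range_add_one (Q · ω)}
  have hdoob : (c ^ 2).toNNReal * P A ≤ ENNReal.ofReal (∫ ω in A, Q n ω ∂P) :=
    maximal_ineq hsub (fun m ω => sq_nonneg _) n
  have hincl : {ω | ∃ m ≤ n + 1, c ≤ |∑ j ∈ range m, X j ω|} ⊆ A := by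
    rintro ω ⟨_ | m, hm, hcm⟩
    · simp [hc.not_ge] at hcm
    have hQm : c ^ 2 ≤ Q m ω := by
      simpa [Q, sq_abs] using pow_le_pow_left₀ hc.le hcm 2
    simp only [A, Set.mem_ofPred_eq, Real.coe_toNNReal _ (sq_nonneg c)]
    exact hQm.trans (le_sup' (Q · ω) (mem_range.2 (by omega)))
  have hsetIntegral : ∫ ω in A, Q n ω ∂P ≤ ∑ j ∈ range (n + 1), ∫ ω, X j ω ^ 2 ∂P := by
    rw [← integral_sq_sum_of_iIndepFun hX hmean hL2]
    exact setIntegral_le_integral (hsub.integrable n) (ae_of_all _ fun ω => sq_nonneg _)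
  rw [ENNReal.ofReal_div_of_pos (by positivity), ENNReal.le_div_iff_mul_le (by simp [hc.ne'])
    (by simp), mul_comm]
  calc ENNReal.ofReal (c ^ 2) * P _ ≤ (c ^ 2).toNNReal * P A := by
        rw [ENNReal.ofReal]; gcongr
    _ ≤ _ := hdoob.trans (ENNReal.ofReal_le_ofReal hsetIntegral)

lemma measure_exists_near_abs_partialSum_sub_ge_le (hXm : ∀ j, Measurable (X j))
    (hX : iIndepFun X P) (hmean : ∀ j, ∫ ω, X j ω ∂P = 0) (hL2 : ∀ j, MemLp (X j) 2 P)
    {σ2 : ℝ} (hsq : ∀ j, ∫ ω, X j ω ^ 2 ∂P = σ2) (k : ℕ) {δ : ℝ} (hδ0 : 0 ≤ δ) (hδ : δ ≤ 1)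
    {c : ℝ} (hc : 0 < c) :
    P {ω | ∃ m : ℕ, |(m : ℝ) - k| ≤ δ * k ∧
        c ≤ |∑ j ∈ range m, X j ω - ∑ j ∈ range k, X j ω|}
      ≤ ENNReal.ofReal (8 * δ * k * σ2 / c ^ 2) := by
  have hσ2 : 0 ≤ σ2 := hsq 0 ▸ integral_nonneg fun ω => sq_nonneg _
  set d := ⌊δ * k⌋₊
  have hd : (d : ℝ) ≤ δ * k := Nat.floor_le (by positivity)
  have hd' : δ * k < d + 1 := Nat.lt_floor_add_one _
  have hdk : d ≤ k := by exact_mod_cast hd.trans (by nlinarith : δ * k ≤ (k : ℝ))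
  -- compare both `S m` and `S k` with `S k₀` at the left end of the window
  set k₀ := k - d
  set T : ℕ → Ω → ℝ := fun i ω => ∑ j ∈ range i, X (k₀ + j) ω
  have hT : ∀ i ω, ∑ j ∈ range (k₀ + i), X j ω = ∑ j ∈ range k₀, X j ω + T i ω :=
    fun i ω => sum_range_add _ _ _
  have hincl : {ω | ∃ m : ℕ, |(m : ℝ) - k| ≤ δ * k ∧
      c ≤ |∑ j ∈ range m, X j ω - ∑ j ∈ range k, X j ω|}
      ⊆ {ω | ∃ i ≤ 2 * d, c / 2 ≤ |T i ω|} := by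
    rintro ω ⟨m, hmk, hcm⟩
    have hmk' := abs_le.1 hmk
    have hleft : k < m + d + 1 := by exact_mod_cast (by linarith : (k : ℝ) < m + d + 1)
    have hright : m < k + d + 1 := by exact_mod_cast (by linarith : (m : ℝ) < k + d + 1)
    obtain ⟨i, rfl⟩ : ∃ i, m = k₀ + i := ⟨m - k₀, by omega⟩
    rw [show k = k₀ + d by omega, hT, hT, add_sub_add_left_eq_sub] at hcm
    simp only [Set.mem_ofPred_eq]
    by_contra! hsmall
    linarith [abs_sub (T i ω) (T d ω), hsmall i (by omega), hsmall d (by omega)]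
  refine (measure_mono hincl).trans <| (measure_exists_le_abs_partialSum_ge_le
    (fun j => hXm _) (hX.precomp (add_right_injective k₀)) (fun j => hmean _) (fun j => hL2 _)
    (2 * d) (half_pos hc)).trans (ENNReal.ofReal_le_ofReal ?_)
  simp only [hsq, sum_const, card_range, nsmul_eq_mul, div_pow]
  rw [div_div_eq_mul_div, div_le_div_iff_of_pos_right (by positivity)]
  push_cast
  nlinarith [mul_le_mul_of_nonneg_right hd hσ2]

lemma measure_le_abs_partialSum_div_sqrt_sub_le (hXm : ∀ j, Measurable (X j))
    (hX : iIndepFun X P) (hmean : ∀ j, ∫ ω, X j ω ∂P = 0) (hL2 : ∀ j, MemLp (X j) 2 P)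
    {σ2 : ℝ} (hsq : ∀ j, ∫ ω, X j ω ^ 2 ∂P = σ2) (N : Ω → ℕ) {k : ℕ} (hk : 0 < k)
    {δ ε : ℝ} (hδ0 : 0 < δ) (hδ : δ ≤ 1 / 2) (hε : 0 < ε) :
    P {ω | ε ≤ |(∑ j ∈ range (N ω), X j ω) / √(N ω) - (∑ j ∈ range k, X j ω) / √k|}
      ≤ P {ω | δ * k < |(N ω : ℝ) - k|} + ENNReal.ofReal (144 * δ * σ2 / ε ^ 2) := by
  have hσ2 : 0 ≤ σ2 := hsq 0 ▸ integral_nonneg fun ω => sq_nonneg _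
  have hkpos : (0 : ℝ) < k := by exact_mod_cast hk
  set c := ε * √k / 4
  have hc : 0 < c := by positivity
  set W := {ω | ∃ m : ℕ, |(m : ℝ) - k| ≤ δ * k ∧
    c ≤ |∑ j ∈ range m, X j ω - ∑ j ∈ range k, X j ω|}
  set E := {ω | ∃ m ≤ k, c / δ ≤ |∑ j ∈ range m, X j ω|}
  have hincl : {ω | ε ≤ |(∑ j ∈ range (N ω), X j ω) / √(N ω) - (∑ j ∈ range k, X j ω) / √k|}
      ⊆ {ω | δ * k < |(N ω : ℝ) - k|} ∪ W ∪ E := by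
    intro ω hω
    by_contra hgood
    simp only [Set.mem_union, Set.mem_ofPred_eq, not_or, not_lt, not_exists, not_and,
      not_le, W, E] at hgood hω
    obtain ⟨⟨hNk, hW⟩, hE⟩ := hgood
    refine hω.not_gt (abs_div_sqrt_sub_div_sqrt_lt hkpos hδ hε hNk (hW (N ω) hNk) ?_)
    rw [mul_comm, ← lt_div_iff₀ hδ0]
    exact hE k le_rfl
  have hPW : P W ≤ ENNReal.ofReal (128 * δ * σ2 / ε ^ 2) := by
    refine (measure_exists_near_abs_partialSum_sub_ge_le hXm hX hmean hL2 hsq k hδ0.le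
      (by linarith) hc).trans_eq (congrArg ENNReal.ofReal ?_)
    simp only [c, div_pow, mul_pow, sq_sqrt hkpos.le]
    field_simp
    ring
  have hPE : P E ≤ ENNReal.ofReal (16 * δ * σ2 / ε ^ 2) := by
    refine (measure_exists_le_abs_partialSum_ge_le hXm hX hmean hL2 k
      (div_pos hc hδ0)).trans (ENNReal.ofReal_le_ofReal ?_)
    simp only [hsq, sum_const, card_range, nsmul_eq_mul, c, div_pow, mul_pow, sq_sqrt hkpos.le]
    rw [show k * σ2 / (ε ^ 2 * k / 4 ^ 2 / δ ^ 2) = 16 * δ * σ2 / ε ^ 2 * δ by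
      field_simp; ring]
    exact mul_le_of_le_one_right (by positivity) (by linarith)
  calc _ ≤ P ({ω | δ * k < |(N ω : ℝ) - k|} ∪ W ∪ E) := measure_mono hincl
    _ ≤ P {ω | δ * k < |(N ω : ℝ) - k|} + P W + P E :=
        (measure_union_le _ _).trans (by gcongr; exact measure_union_le _ _)
    _ ≤ P {ω | δ * k < |(N ω : ℝ) - k|} + ENNReal.ofReal (128 * δ * σ2 / ε ^ 2)
        + ENNReal.ofReal (16 * δ * σ2 / ε ^ 2) := by gcongr
    _ = _ := by
        rw [add_assoc, ← ENNReal.ofReal_add (by positivity) (by positivity)]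
        ring_nf


lemma eventually_measure_le_abs_partialSum_div_sqrt_sub_floor_le (hXm : ∀ j, Measurable (X j))
    (hX : iIndepFun X P) (hmean : ∀ j, ∫ ω, X j ω ∂P = 0) (hL2 : ∀ j, MemLp (X j) 2 P)
    {σ2 : ℝ} (hsq : ∀ j, ∫ ω, X j ω ^ 2 ∂P = σ2) (N : ℕ → Ω → ℕ) {ν δ ε : ℝ} (hν : 0 < ν)
    (hδ0 : 0 < δ) (hδ : δ ≤ 1 / 2) (hε : 0 < ε) :
    ∀ᶠ t : ℕ in atTop,
      P {ω | ε ≤ |(∑ j ∈ range (N t ω), X j ω) / √(N t ω)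
          - (∑ j ∈ range ⌊(t : ℝ) * ν⌋₊, X j ω) / √(⌊(t : ℝ) * ν⌋₊)|}
        ≤ P {ω | δ * ν / 2 ≤ |(N t ω : ℝ) / t - ν|} + ENNReal.ofReal (144 * δ * σ2 / ε ^ 2) := by
  filter_upwards [(tendsto_natCast_atTop_atTop.atTop_mul_const hν).eventually_ge_atTop
    (2 * (1 + δ) / δ)] with t htν
  have htν_pos : 0 < (t : ℝ) * ν := lt_of_lt_of_le (by positivity) htν
  have ht : (0 : ℝ) < t := pos_of_mul_pos_left htν_pos hν.le
  have hk : 0 < ⌊(t : ℝ) * ν⌋₊ := Nat.floor_pos.2 <| le_trans (by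
    rw [le_div_iff₀ hδ0]
    linarith) htν
  refine (measure_le_abs_partialSum_div_sqrt_sub_le hXm hX hmean hL2 hsq (N t) hk hδ0 hδ
    hε).trans ?_
  gcongr ?_ + _
  exact measure_mono fun ω => le_abs_div_sub_of_lt_abs_sub_floor ht hδ0 htν

end IndependentSums

theorem stmt18_general {Ω : Type*} [MeasurableSpace Ω]
    (P : Measure Ω) [IsProbabilityMeasure P]
    (Y : ℕ → Ω → ℝ)
    (hmeasY : ∀ j, Measurable (Y j))
    (hindep : iIndepFun Y P)
    (hident : ∀ j, IdentDistrib (Y j) (Y 0) P P)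
    (hmean : ∫ ω, Y 0 ω ∂P = 0)
    (hL2 : Integrable (fun ω => (Y 0 ω) ^ 2) P)
    (ν : ℝ) (hν : 0 < ν)
    (nhat : ℕ → Ω → ℕ)
    (hconv : TendstoInMeasure P (fun t ω => (nhat t ω : ℝ) / (t : ℝ)) atTop
      (fun _ => ν)) :
    TendstoInMeasure P
      (fun t ω =>
        (∑ j ∈ Finset.range (nhat t ω), Y j ω) / Real.sqrt (nhat t ω) -
          (∑ j ∈ Finset.range ⌊(t : ℝ) * ν⌋₊, Y j ω) / Real.sqrt (⌊(t : ℝ) * ν⌋₊))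
      atTop (fun _ => 0) := by
  have hYmean : ∀ j, ∫ ω, Y j ω ∂P = 0 := fun j => (hident j).integral_eq.trans hmean
  have hYL2 : ∀ j, MemLp (Y j) 2 P := fun j => (hident j).symm.memLp_snd
    ((memLp_two_iff_integrable_sq (hmeasY 0).aestronglyMeasurable).2 hL2)
  have hYsq : ∀ j, ∫ ω, Y j ω ^ 2 ∂P = ∫ ω, Y 0 ω ^ 2 ∂P := fun j =>
    ((hident j).comp (measurable_id.pow_const 2)).integral_eq
  set σ2 := ∫ ω, Y 0 ω ^ 2 ∂P
  simp only [tendstoInMeasure_iff_dist, Real.dist_eq, sub_zero] at hconv ⊢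
  intro ε hε
  rw [ENNReal.tendsto_nhds_zero]
  intro η hη
  have hsmall : Tendsto (fun δ => ENNReal.ofReal (144 * δ * σ2 / ε ^ 2)) (𝓝[>] 0) (𝓝 0) := by
    have := (by fun_prop : Continuous fun δ : ℝ => 144 * δ * σ2 / ε ^ 2).tendsto 0
    simpa using ENNReal.tendsto_ofReal (this.mono_left nhdsWithin_le_nhds)
  obtain ⟨δ, ⟨hδη, hδ⟩, hδ0⟩ := (((hsmall.eventually (gt_mem_nhds hη)).and
    (Ioc_mem_nhdsGT (by norm_num : (0 : ℝ) < 1 / 2))).and self_mem_nhdsWithin).exists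
  have hlim := (hconv (δ * ν / 2) (by positivity)).add_const
    (ENNReal.ofReal (144 * δ * σ2 / ε ^ 2))
  rw [zero_add] at hlim
  filter_upwards [hlim.eventually_lt_const hδη,
    eventually_measure_le_abs_partialSum_div_sqrt_sub_floor_le hmeasY hindep hYmean hYL2 hYsq
      nhat hν hδ0 hδ.2 hε] with t hbad hle
  exact hle.trans hbad.le

theorem stmt18 {Ω : Type*} [MeasurableSpace Ω]
    (P : Measure Ω) [IsProbabilityMeasure P]
    (Y : ℕ → Ω → ℝ)
    (hmeasY : ∀ j, Measurable (Y j))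
    (hindep : iIndepFun Y P)
    (hident : ∀ j, IdentDistrib (Y j) (Y 0) P P)
    (hmean : ∫ ω, Y 0 ω ∂P = 0)
    (hL2 : Integrable (fun ω => (Y 0 ω) ^ 2) P)
    (ν : ℝ) (hν : 0 < ν)
    (nhat : ℕ → Ω → ℕ) (hmeas : ∀ t, Measurable (nhat t))
    (hpos : ∀ t, ∀ᵐ ω ∂P, 1 ≤ nhat t ω)
    (hconv : TendstoInMeasure P (fun t ω => (nhat t ω : ℝ) / (t : ℝ)) atTop
      (fun _ => ν)) :
    TendstoInMeasure P
      (fun t ω =>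
        (∑ j ∈ Finset.range (nhat t ω), Y j ω) / Real.sqrt (nhat t ω) -
          (∑ j ∈ Finset.range ⌊(t : ℝ) * ν⌋₊, Y j ω) / Real.sqrt (⌊(t : ℝ) * ν⌋₊))
      atTop (fun _ => 0) :=
  stmt18_general P Y hmeasY hindep hident hmean hL2 ν hν nhat hconv
end

section
/- Let (Ω, 𝓕, ℙ) be a probability space, let n, N ≥ 1 be integers, let (X_i, Y_i)_{1≤i≤n} be i.i.d. ℝ²-valued random vectors and (X̃_j)_{1≤j≤N} be i.i.d. real random variables each with the same law as X_1, such that the family (X̃_1, …, X̃_N) is independent of ((X_1,Y_1), …, (X_n,Y_n)). Let λ̂ : Ω → ℝ be measurable with respect to the σ-algebra generated by ((X_i,Y_i))_{i≤n}, and assume Y_1, λ̂, λ̂·X_i (for each i) and λ̂·X̃_j (for each j) are integrable. Define θ̂ := (1/n)Σ_{i=1}^n (Y_i − λ̂ X_i) + (1/N)Σ_{j=1}^N λ̂ X̃_j and X̄ := (1/n)Σ_{i=1}^n X_i. Then E[θ̂] − E[Y_1] = −(E[λ̂ X̄] − E[λ̂]·E[X_1]) = −Cov(λ̂, X̄). 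-/
/-!
The mean of the estimator is linear in its terms. Each auxiliary sample `X̃ⱼ` is independent of
`σ((Xᵢ, Yᵢ)ᵢ)`, hence of `λ̂`, so `E[λ̂ X̃ⱼ] = E[λ̂] E[X₁]`; the `Yᵢ` contribute `E[Y₁]`, and
what is left is `-(E[λ̂ X̄] - E[λ̂] E[X₁])`. The covariance form follows from `E[X̄] = E[X₁]`,
which holds even when `X₁` is not integrable, because then neither is the i.i.d. sum.
-/

open MeasureTheory ProbabilityTheory

namespace ProbabilityTheory

variable {Ω : Type*} [MeasurableSpace Ω] {P : Measure Ω}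

-- By Fubini, `x ↦ x + y` is integrable against the law of `f` for some `y`.
lemma IndepFun.integrable_left_of_integrable_add [IsProbabilityMeasure P] {f g : Ω → ℝ}
    (hfg : IndepFun f g P) (hf : AEMeasurable f P) (hg : AEMeasurable g P)
    (h : Integrable (f + g) P) : Integrable f P := by
  have : IsProbabilityMeasure (P.map g) := Measure.isProbabilityMeasure_map hg
  have hsum : Integrable (fun p : ℝ × ℝ => p.1 + p.2) ((P.map f).prod (P.map g)) := by
    rw [← hfg.map_prod_eq_prod_map_map hf hg,
      integrable_map_measure (by fun_prop) (hf.prodMk hg)]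
    exact h
  obtain ⟨y, hy⟩ := hsum.prod_left_ae.exists
  have hid : Integrable id (P.map f) := by
    convert hy.sub (integrable_const y) using 1
    ext x
    simp
  exact (integrable_map_measure aestronglyMeasurable_id hf).1 hid

lemma IndepFun.integral_mul_eq_mul_integral_of_measurable_comap {γ : Type*}
    {mγ : MeasurableSpace γ} {f g : Ω → ℝ} {G : Ω → γ} (h : IndepFun f G P)
    (hG : Measurable G) (hg : Measurable[MeasurableSpace.comap G mγ] g)
    (hf : AEStronglyMeasurable f P) :
    ∫ ω, g ω * f ω ∂P = (∫ ω, g ω ∂P) * ∫ ω, f ω ∂P := by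
  have hfg : IndepFun f g P := indep_of_indep_of_le_right h hg.comap_le
  exact hfg.symm.integral_fun_mul_eq_mul_integral
    (hg.mono hG.comap_le le_rfl).aestronglyMeasurable hf

lemma integral_controlVariate_eq {ι κ : Type*} [Fintype ι] [Fintype κ]
    {X Y : ι → Ω → ℝ} {Xt : κ → Ω → ℝ} {lam : Ω → ℝ} (a b : ℝ)
    (hY : ∀ i, Integrable (Y i) P) (hlamX : ∀ i, Integrable (fun ω => lam ω * X i ω) P)
    (hlamXt : ∀ j, Integrable (fun ω => lam ω * Xt j ω) P) :
    ∫ ω, (a * ∑ i, (Y i ω - lam ω * X i ω) + b * ∑ j, lam ω * Xt j ω) ∂P =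
      a * ∑ i, ∫ ω, Y i ω ∂P - ∫ ω, lam ω * (a * ∑ i, X i ω) ∂P +
        b * ∑ j, ∫ ω, lam ω * Xt j ω ∂P := by
  have hterm i : Integrable (fun ω => Y i ω - lam ω * X i ω) P := (hY i).sub (hlamX i)
  have hcov : ∫ ω, lam ω * (a * ∑ i, X i ω) ∂P = a * ∑ i, ∫ ω, lam ω * X i ω ∂P := by
    simp only [Finset.mul_sum, mul_left_comm (lam _)]
    rw [integral_finsetSum _ fun i _ => (hlamX i).const_mul _]
    simp only [integral_const_mul]
  rw [integral_add ((integrable_finsetSum _ fun i _ => hterm i).const_mul _)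
      ((integrable_finsetSum _ fun j _ => hlamXt j).const_mul _),
    integral_const_mul, integral_const_mul, integral_finsetSum _ fun i _ => hterm i,
    integral_finsetSum _ fun j _ => hlamXt j, hcov]
  simp only [integral_sub (hY _) (hlamX _), Finset.sum_sub_distrib, mul_sub]

-- Both sides vanish when `X i₀` is not integrable: the sum is then not integrable either.
lemma integral_sum_eq_card_mul_of_iIndepFun [IsProbabilityMeasure P] {ι : Type*} [Fintype ι]
    {X : ι → Ω → ℝ} (hindep : iIndepFun X P) (i₀ : ι)
    (hident : ∀ i, IdentDistrib (X i) (X i₀) P P) :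
    ∫ ω, ∑ i, X i ω ∂P = Fintype.card ι * ∫ ω, X i₀ ω ∂P := by
  classical
  by_cases hint : Integrable (X i₀) P
  · have hXi i : Integrable (X i) P := (hident i).integrable_iff.2 hint
    simp [integral_finsetSum _ fun i _ => hXi i, (hident _).integral_eq]
  · have hsplit : ∑ i, X i = X i₀ + ∑ i ∈ Finset.univ.erase i₀, X i :=
      (Finset.add_sum_erase _ _ (Finset.mem_univ i₀)).symm
    have hmeas i : AEMeasurable (X i) P := (hident i).aemeasurable_fst
    have hsum_not : ¬ Integrable (fun ω => ∑ i, X i ω) P := by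
      rw [← Finset.sum_fn, hsplit]
      refine fun h => hint ((hindep.indepFun_finsetSum_of_notMem₀ hmeas
        (Finset.notMem_erase i₀ _)).symm.integrable_left_of_integrable_add (hmeas i₀) ?_ h)
      exact Finset.aemeasurable_sum _ fun i _ => hmeas i
    rw [integral_undef hsum_not, integral_undef hint, mul_zero]

end ProbabilityTheory

theorem stmt19_general {Ω : Type*} [MeasurableSpace Ω]
    (P : Measure Ω) [IsProbabilityMeasure P]
    (n N : ℕ) (hn : 0 < n) (hN : 0 < N)
    (X Y : Fin n → Ω → ℝ) (Xt : Fin N → Ω → ℝ)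
    (hmeasXY : ∀ i, Measurable fun ω => (X i ω, Y i ω))
    (hiid : iIndepFun
      (fun i ω => (X i ω, Y i ω)) P)
    (hident : ∀ i, IdentDistrib (fun ω => (X i ω, Y i ω))
      (fun ω => (X ⟨0, hn⟩ ω, Y ⟨0, hn⟩ ω)) P P)
    (hidentXt : ∀ j, IdentDistrib (Xt j) (X ⟨0, hn⟩) P P)
    (hindep : IndepFun (fun ω (j : Fin N) => Xt j ω)
      (fun ω (i : Fin n) => (X i ω, Y i ω)) P)
    (lam : Ω → ℝ)
    (hlam : @Measurable Ω ℝ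
      (MeasurableSpace.comap (fun ω (i : Fin n) => (X i ω, Y i ω))
        (inferInstance : MeasurableSpace (Fin n → ℝ × ℝ))) _ lam)
    (hY : Integrable (Y ⟨0, hn⟩) P)
    (hlamX : ∀ i, Integrable (fun ω => lam ω * X i ω) P)
    (hlamXt : ∀ j, Integrable (fun ω => lam ω * Xt j ω) P) :
    ((∫ ω, ((1 / (n : ℝ)) * ∑ i, (Y i ω - lam ω * X i ω) +
        (1 / (N : ℝ)) * ∑ j, lam ω * Xt j ω) ∂P) - ∫ ω, Y ⟨0, hn⟩ ω ∂P =
      -((∫ ω, lam ω * ((1 / (n : ℝ)) * ∑ i, X i ω) ∂P) -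
        (∫ ω, lam ω ∂P) * ∫ ω, X ⟨0, hn⟩ ω ∂P)) ∧
    ((∫ ω, ((1 / (n : ℝ)) * ∑ i, (Y i ω - lam ω * X i ω) +
        (1 / (N : ℝ)) * ∑ j, lam ω * Xt j ω) ∂P) - ∫ ω, Y ⟨0, hn⟩ ω ∂P =
      -((∫ ω, lam ω * ((1 / (n : ℝ)) * ∑ i, X i ω) ∂P) -
        (∫ ω, lam ω ∂P) * ∫ ω, (1 / (n : ℝ)) * ∑ i, X i ω ∂P)) := by
  set z : Fin n := ⟨0, hn⟩
  have hidX i : IdentDistrib (X i) (X z) P P := (hident i).comp measurable_fst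
  have hidY i : IdentDistrib (Y i) (Y z) P P := (hident i).comp measurable_snd
  have hY_int i : Integrable (Y i) P := (hidY i).integrable_iff.2 hY
  have hlamXt_eq j : ∫ ω, lam ω * Xt j ω ∂P = (∫ ω, lam ω ∂P) * ∫ ω, X z ω ∂P := by
    have hind : IndepFun (Xt j) (fun ω i => (X i ω, Y i ω)) P :=
      hindep.comp (measurable_pi_apply j) measurable_id
    rw [hind.integral_mul_eq_mul_integral_of_measurable_comap (measurable_pi_lambda _ hmeasXY)
      hlam (hidentXt j).aestronglyMeasurable_fst,
      (hidentXt j).integral_eq]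
  have hXbar : ∫ ω, (1 / (n : ℝ)) * ∑ i, X i ω ∂P = ∫ ω, X z ω ∂P := by
    have hiidX : iIndepFun X P := hiid.comp (fun _ => Prod.fst) fun _ => measurable_fst
    rw [integral_const_mul, integral_sum_eq_card_mul_of_iIndepFun hiidX z hidX]
    field_simp
    simp
  have hbias : (∫ ω, ((1 / (n : ℝ)) * ∑ i, (Y i ω - lam ω * X i ω) +
      (1 / (N : ℝ)) * ∑ j, lam ω * Xt j ω) ∂P) - ∫ ω, Y z ω ∂P =
      -((∫ ω, lam ω * ((1 / (n : ℝ)) * ∑ i, X i ω) ∂P) -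
        (∫ ω, lam ω ∂P) * ∫ ω, X z ω ∂P) := by
    rw [integral_controlVariate_eq _ _ hY_int hlamX hlamXt]
    simp only [(hidY _).integral_eq, hlamXt_eq, Finset.sum_const, Finset.card_univ,
      Fintype.card_fin, nsmul_eq_mul]
    field_simp
    ring
  exact ⟨hbias, hXbar ▸ hbias⟩

theorem stmt19 {Ω : Type*} [MeasurableSpace Ω]
    (P : Measure Ω) [IsProbabilityMeasure P]
    (n N : ℕ) (hn : 0 < n) (hN : 0 < N)
    (X Y : Fin n → Ω → ℝ) (Xt : Fin N → Ω → ℝ)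
    (hmeasXY : ∀ i, Measurable fun ω => (X i ω, Y i ω))
    (hmeasXt : ∀ j, Measurable (Xt j))
    (hiid : iIndepFun
      (fun i ω => (X i ω, Y i ω)) P)
    (hident : ∀ i, IdentDistrib (fun ω => (X i ω, Y i ω))
      (fun ω => (X ⟨0, hn⟩ ω, Y ⟨0, hn⟩ ω)) P P)
    (hiidXt : iIndepFun Xt P)
    (hidentXt : ∀ j, IdentDistrib (Xt j) (X ⟨0, hn⟩) P P)
    (hindep : IndepFun (fun ω (j : Fin N) => Xt j ω)
      (fun ω (i : Fin n) => (X i ω, Y i ω)) P)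
    (lam : Ω → ℝ)
    (hlam : @Measurable Ω ℝ
      (MeasurableSpace.comap (fun ω (i : Fin n) => (X i ω, Y i ω))
        (inferInstance : MeasurableSpace (Fin n → ℝ × ℝ))) _ lam)
    (hY : Integrable (Y ⟨0, hn⟩) P)
    (hlamInt : Integrable lam P)
    (hlamX : ∀ i, Integrable (fun ω => lam ω * X i ω) P)
    (hlamXt : ∀ j, Integrable (fun ω => lam ω * Xt j ω) P) :
    ((∫ ω, ((1 / (n : ℝ)) * ∑ i, (Y i ω - lam ω * X i ω) +
        (1 / (N : ℝ)) * ∑ j, lam ω * Xt j ω) ∂P) - ∫ ω, Y ⟨0, hn⟩ ω ∂P =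
      -((∫ ω, lam ω * ((1 / (n : ℝ)) * ∑ i, X i ω) ∂P) -
        (∫ ω, lam ω ∂P) * ∫ ω, X ⟨0, hn⟩ ω ∂P)) ∧
    ((∫ ω, ((1 / (n : ℝ)) * ∑ i, (Y i ω - lam ω * X i ω) +
        (1 / (N : ℝ)) * ∑ j, lam ω * Xt j ω) ∂P) - ∫ ω, Y ⟨0, hn⟩ ω ∂P =
      -((∫ ω, lam ω * ((1 / (n : ℝ)) * ∑ i, X i ω) ∂P) -
        (∫ ω, lam ω ∂P) * ∫ ω, (1 / (n : ℝ)) * ∑ i, X i ω ∂P)) :=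
  stmt19_general P n N hn hN X Y Xt hmeasXY hiid hident hidentXt hindep lam hlam hY hlamX hlamXt
end
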